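/- arXiv:1506.02911 — 14 statements merged into one kernel-verified Lean document; each statement's English description precedes it below -/
import Mathlib

section
/- Suppose the candidates are ordered so that p_1/t_1 ≥ p_2/t_2 ≥ … ≥ p_N/t_N. Then for every permutation σ of {1,…,N}, the expected solving time of the identity order is minimal: E(id) ≤ E(σ). -/
/-!
Since `∏_{j<k} (1 - p_j) · p_k = ∏_{j<k} (1 - p_j) - ∏_{j≤k} (1 - p_j)`, summation by parts
gives `E(σ) = Σ_k t_{σ k} ∏_{j<k} (1 - p_{σ j}) - (Σ_l t_l) ∏_j (1 - p_j)`, and the subtracted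
term does not depend on `σ`. In the remaining sum `t_1 + (1 - p_1) (t_2 + (1 - p_2) (t_3 + …))`,
exchanging two adjacent candidates `a, b` changes the value by `p_a t_b - p_b t_a` only, so moving
a candidate of maximal ratio `p/t` to the front never increases it; induction on the length of
the list does the rest.
-/

open Finset

/-- Expected solving time of examining candidates `1,…,N` in the order given by the
permutation `σ` of `{1,…,N}`:
`E(σ) = Σ_{k=1}^N (Σ_{l=1}^k t_{σ(l)}) · (∏_{j=1}^{k−1} (1 − p_{σ(j)})) · p_{σ(k)}`. -/
noncomputable def solveTime (N : ℕ) (p t : ℕ → ℝ) (σ : Equiv.Perm ℕ) : ℝ :=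
  ∑ k ∈ Finset.Icc 1 N, (∑ l ∈ Finset.Icc 1 k, t (σ l)) *
    (∏ j ∈ Finset.Icc 1 (k - 1), (1 - p (σ j))) * p (σ k)

noncomputable def trialTime : List (ℝ × ℝ) → ℝ
  | [] => 0
  | x :: xs => x.2 + (1 - x.1) * trialTime xs

theorem trialTime_swap_le {a b : ℝ × ℝ} (w : List (ℝ × ℝ)) (h : b.1 * a.2 ≤ a.1 * b.2) :
    trialTime (a :: b :: w) ≤ trialTime (b :: a :: w) := by
  simp only [trialTime]
  linear_combination h

theorem trialTime_cons_le_cons {x : ℝ × ℝ} (hx : x.1 ≤ 1) {l l' : List (ℝ × ℝ)}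
    (h : trialTime l ≤ trialTime l') : trialTime (x :: l) ≤ trialTime (x :: l') := by
  simp only [trialTime]
  gcongr

theorem trialTime_cons_append_le {a : ℝ × ℝ} {u : List (ℝ × ℝ)}
    (hu : ∀ b ∈ u, b.1 ≤ 1 ∧ b.1 * a.2 ≤ a.1 * b.2) (v : List (ℝ × ℝ)) :
    trialTime (a :: (u ++ v)) ≤ trialTime (u ++ a :: v) := by
  induction u with
  | nil => simp
  | cons b u ih =>
    obtain ⟨hb, hba⟩ := hu b List.mem_cons_self
    calc trialTime (a :: b :: (u ++ v))
        ≤ trialTime (b :: a :: (u ++ v)) := trialTime_swap_le _ hba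
      _ ≤ trialTime (b :: (u ++ a :: v)) :=
        trialTime_cons_le_cons hb (ih fun c hc => hu c (List.mem_cons_of_mem b hc))

theorem trialTime_le_of_perm {l l' : List (ℝ × ℝ)} (hl : ∀ x ∈ l, x.1 ≤ 1)
    (hs : l.Pairwise fun a b => b.1 * a.2 ≤ a.1 * b.2) (hp : l.Perm l') :
    trialTime l ≤ trialTime l' := by
  induction l generalizing l' with
  | nil => rw [hp.nil_eq]
  | cons a l ih =>
    obtain ⟨u, v, rfl⟩ := List.append_of_mem (hp.subset List.mem_cons_self)
    rw [List.pairwise_cons] at hs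
    have hu : ∀ b ∈ u, b.1 ≤ 1 ∧ b.1 * a.2 ≤ a.1 * b.2 := by
      intro b hb
      rcases List.mem_cons.mp (hp.symm.subset (List.mem_append_left _ hb)) with rfl | hb
      · exact ⟨hl b List.mem_cons_self, le_rfl⟩
      · exact ⟨hl b (List.mem_cons_of_mem a hb), hs.1 b hb⟩
    calc trialTime (a :: l)
        ≤ trialTime (a :: (u ++ v)) :=
          trialTime_cons_le_cons (hl a List.mem_cons_self)
            (ih (fun x hx => hl x (List.mem_cons_of_mem a hx)) hs.2
              (hp.trans List.perm_middle).cons_inv)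
      _ ≤ trialTime (u ++ a :: v) := trialTime_cons_append_le hu v

theorem trialTime_append (xs ys : List (ℝ × ℝ)) :
    trialTime (xs ++ ys) = trialTime xs + (xs.map fun x => 1 - x.1).prod * trialTime ys := by
  induction xs with
  | nil => simp [trialTime]
  | cons x xs ih => simp only [List.cons_append, trialTime, ih, List.map_cons, List.prod_cons]; ring

theorem List.Nodup.map_perm_self {α : Type*} {l : List α} (hl : l.Nodup) {σ : Equiv.Perm α}
    (hσ : {a | σ a ≠ a} ⊆ {a | a ∈ l}) : (l.map σ).Perm l :=
  Multiset.coe_eq_coe.mp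
    (congrArg Finset.val (Finset.map_perm (s := ⟨(l : Multiset α), hl⟩) hσ))

theorem prod_map_range'_one {M : Type*} [CommMonoid M] (g : ℕ → M) (N : ℕ) :
    ((List.range' 1 N).map g).prod = ∏ j ∈ Icc 1 N, g j := by
  rw [Finset.prod_eq_multiset_prod]; rfl

theorem trialTime_map_range' (f : ℕ → ℝ × ℝ) (N : ℕ) :
    trialTime ((List.range' 1 N).map f) =
      ∑ l ∈ Icc 1 N, (f l).2 * ∏ j ∈ Icc 1 (l - 1), (1 - (f j).1) := by
  induction N with
  | zero => simp [trialTime]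
  | succ N ih =>
    rw [sum_Icc_succ_top (Nat.le_add_left 1 N), List.range'_1_concat, List.map_append,
      trialTime_append, ih, List.map_map, prod_map_range'_one]
    simp [trialTime, Nat.add_comm 1 N, mul_comm]

theorem sum_prefixSum_mul_firstSuccess (a b : ℕ → ℝ) (N : ℕ) :
    ∑ k ∈ Icc 1 N, (∑ l ∈ Icc 1 k, b l) * (∏ j ∈ Icc 1 (k - 1), (1 - a j)) * a k
      = ∑ l ∈ Icc 1 N, b l * ∏ j ∈ Icc 1 (l - 1), (1 - a j)
        - (∑ l ∈ Icc 1 N, b l) * ∏ j ∈ Icc 1 N, (1 - a j) := by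
  induction N with
  | zero => simp
  | succ N ih =>
    have h1 := Nat.le_add_left 1 N
    rw [sum_Icc_succ_top h1, sum_Icc_succ_top h1 b, prod_Icc_succ_top h1,
      sum_Icc_succ_top h1 (fun l => b l * ∏ j ∈ Icc 1 (l - 1), (1 - a j)), Nat.add_sub_cancel]
    linear_combination ih

theorem solveTime_eq (N : ℕ) (p t : ℕ → ℝ) (σ : Equiv.Perm ℕ) :
    solveTime N p t σ = trialTime ((List.range' 1 N).map fun i => (p (σ i), t (σ i)))
      - (∑ l ∈ Icc 1 N, t (σ l)) * ∏ j ∈ Icc 1 N, (1 - p (σ j)) := by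
  rw [solveTime, sum_prefixSum_mul_firstSuccess (fun i => p (σ i)) (fun i => t (σ i)),
    trialTime_map_range']

theorem solomonoff_strategy_optimal_general
    (N : ℕ) (p t : ℕ → ℝ)
    (hp : ∀ i ∈ Finset.Icc 1 N, p i ∈ Set.Icc (0 : ℝ) 1)
    (ht : ∀ i ∈ Finset.Icc 1 N, 0 < t i)
    (hord : ∀ i ∈ Finset.Icc 1 (N - 1), p (i + 1) / t (i + 1) ≤ p i / t i)
    (σ : Equiv.Perm ℕ) (hσ : ∀ i, i ∉ Finset.Icc 1 N → σ i = i) :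
    solveTime N p t (Equiv.refl ℕ) ≤ solveTime N p t σ := by
  have hrange (i : ℕ) : i ∈ List.range' 1 N ↔ i ∈ Icc 1 N := by
    rw [List.mem_range'_1, mem_Icc]; omega
  have hsupp : {i | σ i ≠ i} ⊆ ↑(Icc 1 N) := fun i hi => by_contra fun h => hi (hσ i h)
  have hperm : ((List.range' 1 N).map fun i => (p (σ i), t (σ i))).Perm
      ((List.range' 1 N).map fun i => (p i, t i)) := by
    have := (List.nodup_range' (s := 1) (n := N)).map_perm_self
      fun i hi => (hrange i).mpr (hsupp hi)
    simpa [List.map_map, Function.comp_def] using this.map fun i => (p i, t i)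
  have hratio : ((List.range' 1 N).map fun i => p i / t i).Pairwise (· ≥ ·) := by
    refine List.isChain_iff_pairwise.mp (List.isChain_iff_getElem.mpr fun i hi => ?_)
    simp only [List.length_map, List.length_range'] at hi
    simpa [add_assoc] using hord (1 + i) (by simp; omega)
  have hsorted : ((List.range' 1 N).map fun i => (p i, t i)).Pairwise
      fun a b => b.1 * a.2 ≤ a.1 * b.2 := by
    rw [List.pairwise_map] at hratio ⊢
    exact hratio.imp_of_mem fun hi hj hij =>
      (div_le_div_iff₀ (ht _ ((hrange _).mp hj)) (ht _ ((hrange _).mp hi))).mp hij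
  have hp_le_one : ∀ x ∈ (List.range' 1 N).map fun i => (p i, t i), x.1 ≤ 1 := by
    simp only [List.forall_mem_map]
    exact fun i hi => (hp i ((hrange i).mp hi)).2
  rw [solveTime_eq, solveTime_eq, σ.sum_comp _ t hsupp, σ.prod_comp _ (fun j => 1 - p j) hsupp]
  simpa using trialTime_le_of_perm hp_le_one hsorted hperm.symm

/-- If the candidates are ordered so that `p_1/t_1 ≥ p_2/t_2 ≥ … ≥ p_N/t_N`, then for every
permutation `σ` of `{1,…,N}` the expected solving time of the identity order is minimal. -/
theorem solomonoff_strategy_optimal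
    (N : ℕ) (hN : 1 ≤ N) (p t : ℕ → ℝ)
    (hp : ∀ i ∈ Finset.Icc 1 N, p i ∈ Set.Icc (0 : ℝ) 1)
    (ht : ∀ i ∈ Finset.Icc 1 N, 0 < t i)
    (hord : ∀ i ∈ Finset.Icc 1 (N - 1), p (i + 1) / t (i + 1) ≤ p i / t i)
    (σ : Equiv.Perm ℕ) (hσ : ∀ i, i ∉ Finset.Icc 1 N → σ i = i) :
    solveTime N p t (Equiv.refl ℕ) ≤ solveTime N p t σ :=
  solomonoff_strategy_optimal_general N p t hp ht hord σ hσ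
end

section
/- Suppose the candidates are ordered so that p_1/t_1 ≥ p_2/t_2 ≥ … ≥ p_N/t_N. Then for every permutation σ of {1,…,N}, the corrected expected solving time of the identity order is minimal: E'(id) ≤ E'(σ). -/
open Finset

/-- Corrected expected solving time, accounting for the possibility that all candidates fail:
`E'(σ) = E(σ) + (Σ_{l=1}^N t_l) · ∏_{j=1}^N (1 − p_j)` (the tail term does not depend on σ). -/
noncomputable def correctedSolveTime (N : ℕ) (p t : ℕ → ℝ) (σ : Equiv.Perm ℕ) : ℝ :=
  solveTime N p t σ +
    (∑ l ∈ Finset.Icc 1 N, t l) * ∏ j ∈ Finset.Icc 1 N, (1 - p j)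

/-!
Unrolling the tail term gives `E'(σ) = Σₖ t_{σ k} ∏_{j<k} (1 - p_{σ j})`, the Horner expression
`t_{σ 1} + (1 - p_{σ 1}) (t_{σ 2} + (1 - p_{σ 2}) (⋯))`. Swapping two adjacent candidates `a, b`
in it changes its value by `p_a t_b - p_b t_a` times the (nonnegative) probability that the
candidates before them fail, so moving the candidate of largest `p / t` to the front never
increases `E'`, and induction on the remaining list finishes the exchange argument.
-/

namespace List

variable {α : Type*} (p t : α → ℝ)

/-- `E'` in Horner form: the expected time to try the candidates of the list in order until one
succeeds, paying for the whole list when all of them fail. -/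
def expectedSolveTime : List α → ℝ
  | [] => 0
  | a :: L => t a + (1 - p a) * expectedSolveTime L

@[simp]
lemma expectedSolveTime_nil : expectedSolveTime p t [] = 0 := rfl

@[simp]
lemma expectedSolveTime_cons (a : α) (L : List α) :
    expectedSolveTime p t (a :: L) = t a + (1 - p a) * expectedSolveTime p t L := rfl

lemma expectedSolveTime_concat (L : List α) (a : α) :
    expectedSolveTime p t (L ++ [a]) =
      expectedSolveTime p t L + (L.map fun x => 1 - p x).prod * t a := by
  induction L with
  | nil => simp
  | cons x L ih => simp only [cons_append, expectedSolveTime_cons, ih, map_cons, prod_cons]; ring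

variable {p t}

lemma expectedSolveTime_cons_le_cons {a : α} {L L' : List α} (ha : p a ≤ 1)
    (h : expectedSolveTime p t L ≤ expectedSolveTime p t L') :
    expectedSolveTime p t (a :: L) ≤ expectedSolveTime p t (a :: L') := by
  simp only [expectedSolveTime_cons]
  gcongr

lemma expectedSolveTime_swap_le {a b : α} (L : List α) (hab : p b * t a ≤ p a * t b) :
    expectedSolveTime p t (a :: b :: L) ≤ expectedSolveTime p t (b :: a :: L) := by
  simp only [expectedSolveTime_cons]
  linarith

lemma expectedSolveTime_cons_append_le {a : α} (A B : List α)
    (hA : ∀ x ∈ A, p x ≤ 1 ∧ p x * t a ≤ p a * t x) :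
    expectedSolveTime p t (a :: (A ++ B)) ≤ expectedSolveTime p t (A ++ a :: B) := by
  induction A with
  | nil => rfl
  | cons x A ih =>
    obtain ⟨hx, hxa⟩ := hA x mem_cons_self
    calc expectedSolveTime p t (a :: x :: (A ++ B))
        ≤ expectedSolveTime p t (x :: a :: (A ++ B)) := expectedSolveTime_swap_le _ hxa
      _ ≤ expectedSolveTime p t (x :: (A ++ a :: B)) :=
        expectedSolveTime_cons_le_cons hx (ih fun y hy => hA y (mem_cons_of_mem x hy))

theorem expectedSolveTime_le_of_perm {L₀ L : List α} (hL : L.Perm L₀) (hp : ∀ x ∈ L₀, p x ≤ 1)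
    (hsorted : L₀.Pairwise fun a b => p b * t a ≤ p a * t b) :
    expectedSolveTime p t L₀ ≤ expectedSolveTime p t L := by
  induction L₀ generalizing L with
  | nil => rw [perm_nil.mp hL]
  | cons a T ih =>
    obtain ⟨A, B, rfl⟩ := append_of_mem (hL.mem_iff.mpr mem_cons_self)
    have hAB : (A ++ B).Perm T := (perm_middle.symm.trans hL).cons_inv
    obtain ⟨ha, hT⟩ := pairwise_cons.mp hsorted
    calc expectedSolveTime p t (a :: T)
        ≤ expectedSolveTime p t (a :: (A ++ B)) :=
          expectedSolveTime_cons_le_cons (hp a mem_cons_self)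
            (ih hAB (fun x hx => hp x (mem_cons_of_mem a hx)) hT)
      _ ≤ expectedSolveTime p t (A ++ a :: B) := by
          refine expectedSolveTime_cons_append_le A B fun x hx => ?_
          have hxT : x ∈ T := hAB.subset (mem_append_left B hx)
          exact ⟨hp x (mem_cons_of_mem a hxT), ha x hxT⟩

end List

lemma mem_range'_one_iff_mem_Icc {i N : ℕ} : i ∈ List.range' 1 N ↔ i ∈ Icc 1 N := by
  rw [List.mem_range'_1, Finset.mem_Icc]
  omega

lemma prod_Icc_one_eq_prod_range' {M : Type*} [CommMonoid M] (f : ℕ → M) (N : ℕ) :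
    ∏ j ∈ Icc 1 N, f j = ((List.range' 1 N).map f).prod := by
  rw [← List.prod_toFinset f List.nodup_range']
  congr 1
  ext j
  rw [List.mem_toFinset, mem_range'_one_iff_mem_Icc]

lemma solveTime_add_tail_eq_expectedSolveTime (N : ℕ) (p t : ℕ → ℝ) (σ : Equiv.Perm ℕ) :
    solveTime N p t σ + (∑ l ∈ Icc 1 N, t (σ l)) * ∏ j ∈ Icc 1 N, (1 - p (σ j)) =
      List.expectedSolveTime p t ((List.range' 1 N).map σ) := by
  induction N with
  | zero => simp [solveTime]
  | succ N ih =>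
    rw [List.range'_concat, one_mul, add_comm 1 N, List.map_append, List.map_singleton,
      List.expectedSolveTime_concat, ← ih, List.map_map, Function.comp_def,
      ← prod_Icc_one_eq_prod_range' (fun j => 1 - p (σ j))]
    simp only [solveTime, sum_Icc_succ_top (Nat.le_add_left 1 N),
      prod_Icc_succ_top (Nat.le_add_left 1 N), Nat.add_sub_cancel]
    ring

lemma range'_map_perm_of_support_subset {N : ℕ} {σ : Equiv.Perm ℕ}
    (hσ : {a | σ a ≠ a} ⊆ (Icc 1 N : Set ℕ)) :
    ((List.range' 1 N).map σ).Perm (List.range' 1 N) := by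
  refine (List.perm_ext_iff_of_nodup ((List.nodup_range' (s := 1) (n := N)).map σ.injective)
    List.nodup_range').2 fun x => ?_
  simpa only [List.mem_map, mem_range'_one_iff_mem_Icc, Finset.mem_map, Equiv.coe_toEmbedding,
    eq_iff_iff] using congrArg (x ∈ ·) (Finset.map_perm hσ)

theorem correctedSolveTime_eq_expectedSolveTime {N : ℕ} (p t : ℕ → ℝ) {σ : Equiv.Perm ℕ}
    (hσ : {a | σ a ≠ a} ⊆ (Icc 1 N : Set ℕ)) :
    correctedSolveTime N p t σ = List.expectedSolveTime p t ((List.range' 1 N).map σ) := by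
  rw [correctedSolveTime, ← σ.sum_comp _ _ hσ, ← σ.prod_comp _ (fun j => 1 - p j) hσ]
  exact solveTime_add_tail_eq_expectedSolveTime N p t σ

lemma range'_pairwise_of_ratio_antitone {N : ℕ} {p t : ℕ → ℝ} (ht : ∀ i ∈ Icc 1 N, 0 < t i)
    (hord : ∀ i ∈ Icc 1 (N - 1), p (i + 1) / t (i + 1) ≤ p i / t i) :
    (List.range' 1 N).Pairwise fun a b => p b * t a ≤ p a * t b := by
  have hanti : AntitoneOn (fun i => p i / t i) (Set.Icc 1 N) :=
    antitoneOn_of_add_one_le Set.ordConnected_Icc fun i _ hi hi₁ =>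
      hord i (by simp only [Set.mem_Icc, Finset.mem_Icc] at hi hi₁ ⊢; omega)
  refine List.Pairwise.imp_of_mem (fun ha hb hab => ?_) List.pairwise_lt_range'
  rw [mem_range'_one_iff_mem_Icc] at ha hb
  rw [← div_le_div_iff₀ (ht _ hb) (ht _ ha)]
  exact hanti (Finset.mem_Icc.1 ha) (Finset.mem_Icc.1 hb) hab.le

theorem solomonoff_strategy_optimal_corrected_general
    (N : ℕ) (p t : ℕ → ℝ)
    (hp : ∀ i ∈ Finset.Icc 1 N, p i ∈ Set.Icc (0 : ℝ) 1)
    (ht : ∀ i ∈ Finset.Icc 1 N, 0 < t i)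
    (hord : ∀ i ∈ Finset.Icc 1 (N - 1), p (i + 1) / t (i + 1) ≤ p i / t i)
    (σ : Equiv.Perm ℕ) (hσ : ∀ i, i ∉ Finset.Icc 1 N → σ i = i) :
    correctedSolveTime N p t (Equiv.refl ℕ) ≤ correctedSolveTime N p t σ := by
  have hsupp : {a | σ a ≠ a} ⊆ (Icc 1 N : Set ℕ) := fun a ha => by_contra fun h => ha (hσ a h)
  rw [correctedSolveTime_eq_expectedSolveTime p t hsupp,
    correctedSolveTime_eq_expectedSolveTime p t (by simp), Equiv.coe_refl, List.map_id]
  refine List.expectedSolveTime_le_of_perm (range'_map_perm_of_support_subset hsupp)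
    (fun i hi => (hp i (mem_range'_one_iff_mem_Icc.1 hi)).2)
    (range'_pairwise_of_ratio_antitone ht hord)

/-- If the candidates are ordered so that `p_1/t_1 ≥ p_2/t_2 ≥ … ≥ p_N/t_N`, then for every
permutation `σ` of `{1,…,N}` the corrected expected solving time of the identity order is
minimal. -/
theorem solomonoff_strategy_optimal_corrected
    (N : ℕ) (hN : 1 ≤ N) (p t : ℕ → ℝ)
    (hp : ∀ i ∈ Finset.Icc 1 N, p i ∈ Set.Icc (0 : ℝ) 1)
    (ht : ∀ i ∈ Finset.Icc 1 N, 0 < t i)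
    (hord : ∀ i ∈ Finset.Icc 1 (N - 1), p (i + 1) / t (i + 1) ≤ p i / t i)
    (σ : Equiv.Perm ℕ) (hσ : ∀ i, i ∉ Finset.Icc 1 N → σ i = i) :
    correctedSolveTime N p t (Equiv.refl ℕ) ≤ correctedSolveTime N p t σ :=
  solomonoff_strategy_optimal_corrected_general N p t hp ht hord σ hσ
end

section
/- Let σ be any permutation of {1,…,N}, let 1 ≤ a ≤ N−1, and let σ' be the permutation obtained from σ by interchanging the candidates examined at positions a and a+1. Then E(σ) − E(σ') = (∏_{j=1}^{a−1} (1 − p_{σ(j)})) · t_{σ(a)} · t_{σ(a+1)} · (p_{σ(a+1)}/t_{σ(a+1)} − p_{σ(a)}/t_{σ(a)}). -/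
open Finset

/-- Interchanging the candidates examined at positions `a` and `a+1` changes the expected
solving time by exactly
`E(σ) − E(σ') = (∏_{j=1}^{a−1} (1 − p_{σ(j)})) · t_{σ(a)} · t_{σ(a+1)} ·
  (p_{σ(a+1)}/t_{σ(a+1)} − p_{σ(a)}/t_{σ(a)})`,
where `σ' = σ ∘ (a ↔ a+1)`. -/
theorem solveTime_adjacent_swap_diff
    (N : ℕ) (hN : 1 ≤ N) (p t : ℕ → ℝ)
    (hp : ∀ i ∈ Finset.Icc 1 N, p i ∈ Set.Icc (0 : ℝ) 1)
    (ht : ∀ i ∈ Finset.Icc 1 N, 0 < t i)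
    (σ : Equiv.Perm ℕ) (hσ : ∀ i, i ∉ Finset.Icc 1 N → σ i = i)
    (a : ℕ) (ha1 : 1 ≤ a) (ha2 : a ≤ N - 1) :
    solveTime N p t σ - solveTime N p t (σ * Equiv.swap a (a + 1)) =
      (∏ j ∈ Finset.Icc 1 (a - 1), (1 - p (σ j))) * t (σ a) * t (σ (a + 1)) *
        (p (σ (a + 1)) / t (σ (a + 1)) - p (σ a) / t (σ a)) := by
  obtain ⟨b, rfl⟩ : ∃ b, a = b + 1 := ⟨a - 1, by omega⟩
  set σ' : Equiv.Perm ℕ := σ * Equiv.swap (b + 1) (b + 1 + 1) with hσ'def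
  -- σ maps Icc 1 N into itself
  have hmaps : ∀ i ∈ Finset.Icc 1 N, σ i ∈ Finset.Icc 1 N := by
    intro i hi
    by_contra h
    have := hσ _ h
    have : σ i = i := σ.injective this
    rw [this] at h; exact h hi
  -- basic facts about σ'
  have hσ'eq : ∀ k, k ≠ b + 1 → k ≠ b + 2 → σ' k = σ k := by
    intro k h1 h2
    simp [hσ'def, Equiv.Perm.mul_apply, Equiv.swap_apply_of_ne_of_ne h1 h2]
  have hσ'1 : σ' (b + 1) = σ (b + 2) := by
    simp [hσ'def, Equiv.Perm.mul_apply]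
  have hσ'2 : σ' (b + 2) = σ (b + 1) := by
    simp [hσ'def, Equiv.Perm.mul_apply]
  have hb1N : b + 1 ∈ Finset.Icc 1 N := by simp; omega
  have hb2N : b + 2 ∈ Finset.Icc 1 N := by simp; omega
  have htA : 0 < t (σ (b + 1)) := ht _ (hmaps _ hb1N)
  have htB : 0 < t (σ (b + 2)) := ht _ (hmaps _ hb2N)
  -- the per-index difference
  set d : ℕ → ℝ := fun k =>
    (∑ l ∈ Finset.Icc 1 k, t (σ l)) * (∏ j ∈ Finset.Icc 1 (k - 1), (1 - p (σ j))) * p (σ k)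
    - (∑ l ∈ Finset.Icc 1 k, t (σ' l)) * (∏ j ∈ Finset.Icc 1 (k - 1), (1 - p (σ' j))) * p (σ' k)
    with hd
  have hzero : ∀ k ∈ Finset.Icc 1 N, k ∉ ({b + 1, b + 2} : Finset ℕ) → d k = 0 := by
    intro k hk hk'
    simp only [Finset.mem_insert, Finset.mem_singleton, not_or] at hk'
    obtain ⟨h1, h2⟩ := hk'
    have hsum : ∑ l ∈ Finset.Icc 1 k, t (σ' l) = ∑ l ∈ Finset.Icc 1 k, t (σ l) := by
      rcases lt_or_ge k (b + 1) with hlt | hge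
      · exact Finset.sum_congr rfl fun l hl => by
          rw [hσ'eq l (by simp at hl; omega) (by simp at hl; omega)]
      · have hge' : b + 2 ≤ k := by omega
        have hsupp : {x | Equiv.swap (b + 1) (b + 1 + 1) x ≠ x} ⊆ (Finset.Icc 1 k : Set ℕ) := ?_
        · exact Equiv.Perm.sum_comp _ _ (fun l => t (σ l)) hsupp
        intro x hx
        simp only [Set.mem_setOf_eq] at hx
        have : x = b + 1 ∨ x = b + 2 := by
          by_contra h
          push_neg at h
          exact hx (Equiv.swap_apply_of_ne_of_ne h.1 h.2)
        simp only [Finset.coe_Icc, Set.mem_Icc]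
        omega
    have hprod : ∏ j ∈ Finset.Icc 1 (k - 1), (1 - p (σ' j))
        = ∏ j ∈ Finset.Icc 1 (k - 1), (1 - p (σ j)) := by
      rcases lt_or_ge k (b + 1) with hlt | hge
      · exact Finset.prod_congr rfl fun j hj => by
          rw [hσ'eq j (by simp at hj; omega) (by simp at hj; omega)]
      · have hge' : b + 2 ≤ k - 1 := by omega
        have hsupp : {x | Equiv.swap (b + 1) (b + 1 + 1) x ≠ x} ⊆ (Finset.Icc 1 (k - 1) : Set ℕ) := ?_
        · exact Equiv.Perm.prod_comp _ _ (fun j => 1 - p (σ j)) hsupp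
        intro x hx
        simp only [Set.mem_setOf_eq] at hx
        have : x = b + 1 ∨ x = b + 2 := by
          by_contra h
          push_neg at h
          exact hx (Equiv.swap_apply_of_ne_of_ne h.1 h.2)
        simp only [Finset.coe_Icc, Set.mem_Icc]
        omega
    simp [hd, hsum, hprod, hσ'eq k h1 h2]
  have hpair : ({b + 1, b + 2} : Finset ℕ) ⊆ Finset.Icc 1 N := by
    intro x hx
    simp only [Finset.mem_insert, Finset.mem_singleton] at hx
    rcases hx with rfl | rfl <;> assumption
  have key : solveTime N p t σ - solveTime N p t σ' = d (b + 1) + d (b + 2) := by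
    unfold solveTime
    rw [← Finset.sum_sub_distrib, ← Finset.sum_subset hpair hzero,
      Finset.sum_pair (by omega : b + 1 ≠ b + 2)]
  rw [key]
  -- now compute the two remaining terms
  have hS1 : ∑ l ∈ Finset.Icc 1 (b + 1), t (σ l)
      = ∑ l ∈ Finset.Icc 1 b, t (σ l) + t (σ (b + 1)) :=
    Finset.sum_Icc_succ_top (by omega) _
  have hS1' : ∑ l ∈ Finset.Icc 1 (b + 1), t (σ' l)
      = ∑ l ∈ Finset.Icc 1 b, t (σ l) + t (σ (b + 2)) := by
    rw [Finset.sum_Icc_succ_top (by omega), hσ'1]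
    congr 1
    exact Finset.sum_congr rfl fun l hl => by
      rw [hσ'eq l (by simp at hl; omega) (by simp at hl; omega)]
  have hS2 : ∑ l ∈ Finset.Icc 1 (b + 2), t (σ l)
      = ∑ l ∈ Finset.Icc 1 b, t (σ l) + t (σ (b + 1)) + t (σ (b + 2)) := by
    rw [show b + 2 = (b + 1) + 1 from rfl, Finset.sum_Icc_succ_top (by omega), hS1]
  have hS2' : ∑ l ∈ Finset.Icc 1 (b + 2), t (σ' l)
      = ∑ l ∈ Finset.Icc 1 b, t (σ l) + t (σ (b + 1)) + t (σ (b + 2)) := by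
    rw [show b + 2 = (b + 1) + 1 from rfl, Finset.sum_Icc_succ_top (by omega), hS1', hσ'2]
    ring
  have hPb' : ∏ j ∈ Finset.Icc 1 b, (1 - p (σ' j)) = ∏ j ∈ Finset.Icc 1 b, (1 - p (σ j)) :=
    Finset.prod_congr rfl fun j hj => by
      rw [hσ'eq j (by simp at hj; omega) (by simp at hj; omega)]
  have hP1 : ∏ j ∈ Finset.Icc 1 (b + 1), (1 - p (σ j))
      = (∏ j ∈ Finset.Icc 1 b, (1 - p (σ j))) * (1 - p (σ (b + 1))) :=
    Finset.prod_Icc_succ_top (by omega) _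
  have hP1' : ∏ j ∈ Finset.Icc 1 (b + 1), (1 - p (σ' j))
      = (∏ j ∈ Finset.Icc 1 b, (1 - p (σ j))) * (1 - p (σ (b + 2))) := by
    rw [Finset.prod_Icc_succ_top (by omega), hPb', hσ'1]
  simp only [hd, show b + 1 - 1 = b from rfl, show b + 2 - 1 = b + 1 from rfl,
    show b + 1 + 1 = b + 2 from rfl, hS1, hS1', hS2, hS2', hP1, hP1', hPb', hσ'1, hσ'2]
  field_simp
  ring
end

section
/- Let σ be any permutation of {1,…,N}, let 1 ≤ a ≤ N−1, and let σ' be the permutation obtained from σ by interchanging the candidates examined at positions a and a+1. If p_{σ(a)}/t_{σ(a)} = p_{σ(a+1)}/t_{σ(a+1)}, then E(σ) = E(σ'). -/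
open Finset

/-- If `p_{σ(a)}/t_{σ(a)} = p_{σ(a+1)}/t_{σ(a+1)}`, then interchanging the candidates examined
at positions `a` and `a+1` does not change the expected solving time. -/
theorem solveTime_adjacent_swap_eq
    (N : ℕ) (hN : 1 ≤ N) (p t : ℕ → ℝ)
    (hp : ∀ i ∈ Finset.Icc 1 N, p i ∈ Set.Icc (0 : ℝ) 1)
    (ht : ∀ i ∈ Finset.Icc 1 N, 0 < t i)
    (σ : Equiv.Perm ℕ) (hσ : ∀ i, i ∉ Finset.Icc 1 N → σ i = i)
    (a : ℕ) (ha1 : 1 ≤ a) (ha2 : a ≤ N - 1)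
    (heq : p (σ a) / t (σ a) = p (σ (a + 1)) / t (σ (a + 1))) :
    solveTime N p t σ = solveTime N p t (σ * Equiv.swap a (a + 1)) := by
  obtain ⟨b, rfl⟩ : ∃ b, a = b + 1 := ⟨a - 1, by omega⟩
  have hbN : b + 2 ≤ N := by omega
  have hmap : ∀ i, i ∈ Finset.Icc 1 N → σ i ∈ Finset.Icc 1 N := by
    intro i hi
    by_contra h
    have h2 := hσ _ h
    have h3 : σ i = i := σ.injective h2
    exact h (by rw [h3]; exact hi)
  have hm1 : σ (b+1) ∈ Finset.Icc 1 N := hmap _ (by simp; omega)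
  have hm2 : σ (b+2) ∈ Finset.Icc 1 N := hmap _ (by simp; omega)
  have ht1 : 0 < t (σ (b+1)) := ht _ hm1
  have ht2 : 0 < t (σ (b+2)) := ht _ hm2
  have key : p (σ (b+1)) * t (σ (b+2)) = p (σ (b+2)) * t (σ (b+1)) := by
    field_simp at heq
    linarith
  set σ' := σ * Equiv.swap (b+1) (b+2) with hσ'
  have hs1 : σ' (b+1) = σ (b+2) := by simp [hσ']
  have hs2 : σ' (b+2) = σ (b+1) := by simp [hσ']
  have hs0 : ∀ k, k ≠ b+1 → k ≠ b+2 → σ' k = σ k := by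
    intro k h1 h2
    simp [hσ', Equiv.swap_apply_of_ne_of_ne h1 h2]
  have hsupp : {x | Equiv.swap (b+1) (b+2) x ≠ x} ⊆ {b+1, b+2} := by
    intro x hx
    simp only [Set.mem_setOf_eq] at hx
    by_contra hc
    simp only [Set.mem_insert_iff, Set.mem_singleton_iff] at hc
    push_neg at hc
    exact hx (Equiv.swap_apply_of_ne_of_ne hc.1 hc.2)
  have hsub : ({b+1, b+2} : Finset ℕ) ⊆ Finset.Icc 1 N := by
    intro x hx
    simp only [Finset.mem_insert, Finset.mem_singleton] at hx
    rcases hx with rfl | rfl <;> simp <;> omega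
  unfold solveTime
  rw [← Finset.sum_sdiff hsub, ← Finset.sum_sdiff hsub]
  congr 1
  · apply Finset.sum_congr rfl
    intro k hk
    simp only [Finset.mem_sdiff, Finset.mem_Icc, Finset.mem_insert,
      Finset.mem_singleton] at hk
    obtain ⟨⟨hk1, hk2⟩, hk3⟩ := hk
    push_neg at hk3
    rcases lt_or_gt_of_ne hk3.1 with hlt | hgt
    · have e1 : ∑ l ∈ Finset.Icc 1 k, t (σ l) = ∑ l ∈ Finset.Icc 1 k, t (σ' l) :=
        Finset.sum_congr rfl (fun l hl => by
          simp only [Finset.mem_Icc] at hl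
          rw [hs0 l (by omega) (by omega)])
      have e2 : ∏ j ∈ Finset.Icc 1 (k-1), (1 - p (σ j))
          = ∏ j ∈ Finset.Icc 1 (k-1), (1 - p (σ' j)) :=
        Finset.prod_congr rfl (fun j hj => by
          simp only [Finset.mem_Icc] at hj
          rw [hs0 j (by omega) (by omega)])
      rw [e1, e2, hs0 k (by omega) (by omega)]
    · have hk4 : b + 3 ≤ k := by omega
      have e1 : ∑ l ∈ Finset.Icc 1 k, t (σ' l) = ∑ l ∈ Finset.Icc 1 k, t (σ l) := by
        have h := Equiv.Perm.sum_comp (Equiv.swap (b+1) (b+2)) (Finset.Icc 1 k)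
          (fun l => t (σ l)) (hsupp.trans (by
            intro x hx
            simp only [Set.mem_insert_iff, Set.mem_singleton_iff] at hx
            simp only [Finset.coe_Icc, Set.mem_Icc]
            rcases hx with rfl | rfl <;> omega))
        simpa [hσ', Equiv.Perm.mul_apply] using h
      have e2 : ∏ j ∈ Finset.Icc 1 (k-1), (1 - p (σ' j))
          = ∏ j ∈ Finset.Icc 1 (k-1), (1 - p (σ j)) := by
        have h := Equiv.Perm.prod_comp (Equiv.swap (b+1) (b+2)) (Finset.Icc 1 (k-1))
          (fun j => 1 - p (σ j)) (hsupp.trans (by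
            intro x hx
            simp only [Set.mem_insert_iff, Set.mem_singleton_iff] at hx
            simp only [Finset.coe_Icc, Set.mem_Icc]
            rcases hx with rfl | rfl <;> omega))
        simpa [hσ', Equiv.Perm.mul_apply] using h
      rw [e1, e2, hs0 k (by omega) (by omega)]
  · rw [Finset.sum_pair (by omega : b+1 ≠ b+2), Finset.sum_pair (by omega : b+1 ≠ b+2)]
    simp only [show b+1-1 = b from rfl, show b+2-1 = b+1 from rfl]
    rw [Finset.sum_Icc_succ_top (by omega : 1 ≤ b+1) (fun l => t (σ l)),
        Finset.sum_Icc_succ_top (by omega : 1 ≤ b+1) (fun l => t (σ' l)),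
        Finset.sum_Icc_succ_top (by omega : 1 ≤ b+2) (fun l => t (σ l)),
        Finset.sum_Icc_succ_top (by omega : 1 ≤ b+2) (fun l => t (σ' l)),
        Finset.sum_Icc_succ_top (by omega : 1 ≤ b+1) (fun l => t (σ l)),
        Finset.sum_Icc_succ_top (by omega : 1 ≤ b+1) (fun l => t (σ' l)),
        Finset.prod_Icc_succ_top (by omega : 1 ≤ b+1) (fun j => 1 - p (σ j)),
        Finset.prod_Icc_succ_top (by omega : 1 ≤ b+1) (fun j => 1 - p (σ' j))]
    have eS : ∑ l ∈ Finset.Icc 1 b, t (σ' l) = ∑ l ∈ Finset.Icc 1 b, t (σ l) :=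
      Finset.sum_congr rfl (fun l hl => by
        simp only [Finset.mem_Icc] at hl
        rw [hs0 l (by omega) (by omega)])
    have eP : ∏ j ∈ Finset.Icc 1 b, (1 - p (σ' j)) = ∏ j ∈ Finset.Icc 1 b, (1 - p (σ j)) :=
      Finset.prod_congr rfl (fun j hj => by
        simp only [Finset.mem_Icc] at hj
        rw [hs0 j (by omega) (by omega)])
    rw [eS, eP, hs1, hs2]
    linear_combination (- ∏ j ∈ Finset.Icc 1 b, (1 - p (σ j))) * key
end

section
/- Let n ≥ 2 be a natural number and let 0 ≤ x_i ≤ 1 for i = 1, 2, …, n. Then ∏_{i=1}^n (1 − x_i) ≥ 1 − Σ_{i=1}^n x_i + (n−1) · (∏_{i=1}^n x_i)^{n/(2n−2)}. -/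
open Finset

lemma wu_aux (x : ℕ → ℝ) : ∀ s : Finset ℕ, (∀ i ∈ s, 0 ≤ x i ∧ x i ≤ 1) →
    (∑ p ∈ s.offDiag, x p.1 * x p.2 ≤ ((s.card : ℝ) - 1) * ∑ i ∈ s, x i) ∧
    (∑ i ∈ s, x i ≤ (s.card : ℝ)) ∧
    (1 - ∑ i ∈ s, x i ≤ ∏ i ∈ s, (1 - x i)) ∧
    ((s.card : ℝ) * (1 - ∑ i ∈ s, x i) + ∑ p ∈ s.offDiag, x p.1 * x p.2
        ≤ (s.card : ℝ) * ∏ i ∈ s, (1 - x i)) := by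
  intro s
  induction s using Finset.induction_on with
  | empty => intro _; simp
  | @insert a s ha ih =>
    intro hx
    have hxs : ∀ i ∈ s, 0 ≤ x i ∧ x i ≤ 1 := fun i hi => hx i (mem_insert_of_mem hi)
    obtain ⟨hy0, hy1⟩ := hx a (mem_insert_self a s)
    obtain ⟨h1, h2, h3, h4⟩ := ih hxs
    have ht0 : (0:ℝ) ≤ ∑ i ∈ s, x i := Finset.sum_nonneg fun i hi => (hxs i hi).1
    have hP0 : (0:ℝ) ≤ ∏ i ∈ s, (1 - x i) :=
      Finset.prod_nonneg fun i hi => by linarith [(hxs i hi).2]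
    have hS0 : (0:ℝ) ≤ ∑ p ∈ s.offDiag, x p.1 * x p.2 := by
      refine Finset.sum_nonneg fun p hp => ?_
      obtain ⟨hp1, hp2, -⟩ := Finset.mem_offDiag.mp hp
      exact mul_nonneg (hxs _ hp1).1 (hxs _ hp2).1
    have hd1 : Disjoint (s.offDiag ∪ {a} ×ˢ s) (s ×ˢ {a}) := by
      rw [Finset.disjoint_left]
      rintro ⟨p1, p2⟩ hp hq
      obtain ⟨-, hq2⟩ := Finset.mem_product.mp hq
      rw [Finset.mem_singleton] at hq2
      rcases Finset.mem_union.mp hp with hp | hp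
      · exact ha (hq2 ▸ (Finset.mem_offDiag.mp hp).2.1)
      · obtain ⟨-, hp2⟩ := Finset.mem_product.mp hp
        exact ha (hq2 ▸ hp2)
    have hd2 : Disjoint s.offDiag ({a} ×ˢ s) := by
      rw [Finset.disjoint_left]
      rintro ⟨p1, p2⟩ hp hq
      obtain ⟨hq1, -⟩ := Finset.mem_product.mp hq
      rw [Finset.mem_singleton] at hq1
      exact ha (hq1 ▸ (Finset.mem_offDiag.mp hp).1)
    have hSins : ∑ p ∈ (insert a s).offDiag, x p.1 * x p.2
        = (∑ p ∈ s.offDiag, x p.1 * x p.2) + x a * (∑ i ∈ s, x i) + (∑ i ∈ s, x i) * x a := by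
      rw [Finset.offDiag_insert (a := a) (s := s) ha, Finset.sum_union hd1, Finset.sum_union hd2]
      congr 1
      · congr 1
        rw [Finset.sum_product, Finset.sum_singleton, Finset.mul_sum]
      · rw [Finset.sum_product]
        simp [Finset.sum_mul]
    rw [Finset.sum_insert ha, Finset.prod_insert ha, Finset.card_insert_of_notMem ha, hSins]
    push_cast
    set y := x a
    set t := ∑ i ∈ s, x i
    set P := ∏ i ∈ s, (1 - x i)
    set S := ∑ p ∈ s.offDiag, x p.1 * x p.2
    set c := (s.card : ℝ) with hc
    have hc0 : (0:ℝ) ≤ c := by positivity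
    refine ⟨by nlinarith [mul_nonneg hy0 (sub_nonneg.mpr h2), mul_nonneg ht0 (sub_nonneg.mpr hy1)],
      by linarith, by nlinarith [mul_nonneg (mul_nonneg hy0 ht0) (by norm_num : (0:ℝ) ≤ 1)], ?_⟩
    rcases Finset.eq_empty_or_nonempty s with rfl | hs
    · simp only [Finset.card_empty, Nat.cast_zero] at hc ⊢
      simp [hc]
      nlinarith
    · have hc1 : (1:ℝ) ≤ c := by
        rw [hc]; exact_mod_cast Finset.one_le_card.mpr hs
      have key : c * ((c + 1) * (1 - (y + t)) + (S + y * t + t * y))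
          ≤ c * ((c + 1) * ((1 - y) * P)) := by
        nlinarith [mul_le_mul_of_nonneg_left h4
            (mul_nonneg (by linarith : (0:ℝ) ≤ c + 1) (by linarith : (0:ℝ) ≤ 1 - y)),
          mul_nonneg hy0 (sub_nonneg.mpr h1),
          mul_nonneg hS0 (sub_nonneg.mpr hy1)]
      exact le_of_mul_le_mul_left key (by linarith)

/-- Wu's inequality: for `n ≥ 2` and `0 ≤ x_i ≤ 1`, `i = 1,…,n`,
`∏_{i=1}^n (1 − x_i) ≥ 1 − Σ_{i=1}^n x_i + (n−1) · (∏_{i=1}^n x_i)^{n/(2n−2)}`,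
where the exponent is taken as a real power. -/
theorem wu_inequality
    (n : ℕ) (hn : 2 ≤ n) (x : ℕ → ℝ)
    (hx : ∀ i ∈ Finset.Icc 1 n, x i ∈ Set.Icc (0 : ℝ) 1) :
    ∏ i ∈ Finset.Icc 1 n, (1 - x i) ≥
      1 - (∑ i ∈ Finset.Icc 1 n, x i) +
        ((n : ℝ) - 1) * (∏ i ∈ Finset.Icc 1 n, x i) ^ ((n : ℝ) / (2 * (n : ℝ) - 2)) := by
  set s := Finset.Icc 1 n with hsdef
  have hcardN : s.card = n := by simp [hsdef]
  have hcard : (s.card : ℝ) = n := by rw [hcardN]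
  obtain ⟨h1, h2, h3, h4⟩ := wu_aux x s (fun i hi => ⟨(hx i hi).1, (hx i hi).2⟩)
  rw [hcard] at h1 h2 h4
  have hnR : (2:ℝ) ≤ (n:ℝ) := by exact_mod_cast hn
  have hn0 : (0:ℝ) < (n:ℝ) := by linarith
  set t := ∑ i ∈ s, x i with htdef
  set P := ∏ i ∈ s, (1 - x i) with hPdef
  set S := ∑ q ∈ s.offDiag, x q.1 * x q.2 with hSdef
  set p := ∏ i ∈ s, x i with hpdef
  have hp0 : 0 ≤ p := Finset.prod_nonneg fun i hi => (hx i hi).1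
  have hp1 : p ≤ 1 := Finset.prod_le_one (fun i hi => (hx i hi).1) (fun i hi => (hx i hi).2)
  have he : (0:ℝ) < (n:ℝ) / (2 * (n:ℝ) - 2) := div_pos (by linarith) (by linarith)
  clear_value t P S p
  rcases eq_or_lt_of_le hp0 with hp | hp
  · rw [← hp, Real.zero_rpow he.ne']
    simpa using by linarith [h3]
  · have hN : s.offDiag.card = n * n - n := by rw [Finset.offDiag_card, hcardN]
    have hNR : (s.offDiag.card : ℝ) = (n:ℝ) * n - n := by
      rw [hN, Nat.cast_sub (Nat.le_mul_of_pos_left n (by omega))]; push_cast; ring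
    have hNpos : (0:ℝ) < (s.offDiag.card : ℝ) := by rw [hNR]; nlinarith
    have amgm := Real.geom_mean_le_arith_mean_weighted s.offDiag
      (fun _ => ((s.offDiag.card : ℝ))⁻¹) (fun q => x q.1 * x q.2)
      (fun i _ => by positivity)
      (by rw [Finset.sum_const, nsmul_eq_mul]; exact mul_inv_cancel₀ hNpos.ne')
      (fun q hq => by
        obtain ⟨hq1, hq2, -⟩ := Finset.mem_offDiag.mp hq
        exact mul_nonneg (hx _ hq1).1 (hx _ hq2).1)
    have hprodOff : ∏ q ∈ s.offDiag, (x q.1 * x q.2) = p ^ (2 * n - 2) := by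
      have hsq : ∏ q ∈ s ×ˢ s, (x q.1 * x q.2) = p ^ n * p ^ n := by
        rw [Finset.prod_product]
        simp only [Finset.prod_mul_distrib, Finset.prod_const, ← hpdef]
        rw [Finset.prod_pow, hcardN, ← hpdef]
      have hdiag : ∏ q ∈ s.diag, (x q.1 * x q.2) = p * p := by
        rw [Finset.prod_diag, Finset.prod_mul_distrib, ← hpdef]
      have hun : ∏ q ∈ s.diag ∪ s.offDiag, (x q.1 * x q.2) = p ^ n * p ^ n := by
        rw [Finset.diag_union_offDiag]; exact hsq
      rw [Finset.prod_union (Finset.disjoint_diag_offDiag s), hdiag] at hun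
      have hpp : p * p ≠ 0 := (mul_pos hp hp).ne'
      have hpow : p * p * (p ^ (2 * n - 2)) = p ^ n * p ^ n := by
        rw [← pow_add, ← sq, ← pow_add]
        congr 1
        omega
      exact mul_left_cancel₀ hpp (by rw [hun, hpow])
    rw [Real.finset_prod_rpow s.offDiag _ (fun q hq => by
        obtain ⟨hq1, hq2, -⟩ := Finset.mem_offDiag.mp hq
        exact mul_nonneg (hx _ hq1).1 (hx _ hq2).1) _, hprodOff,
      ← Real.rpow_natCast p (2 * n - 2), ← Real.rpow_mul hp0, ← Finset.mul_sum,
      ← hSdef] at amgm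
    have hexp : ((2 * n - 2 : ℕ) : ℝ) * ((s.offDiag.card : ℝ))⁻¹ = 2 / (n:ℝ) := by
      rw [hNR, Nat.cast_sub (by omega)]
      push_cast
      rw [← div_eq_mul_inv, div_eq_div_iff (by nlinarith) hn0.ne']
      ring
    rw [hexp] at amgm
    have hSN : ((n:ℝ) * n - n) * p ^ ((2:ℝ) / n) ≤ S := by
      have h := mul_le_mul_of_nonneg_left amgm hNpos.le
      rw [← mul_assoc, mul_inv_cancel₀ hNpos.ne', one_mul, hNR] at h
      exact h
    have hee : p ^ ((n : ℝ) / (2 * (n : ℝ) - 2)) ≤ p ^ ((2:ℝ) / n) := by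
      apply Real.rpow_le_rpow_of_exponent_ge hp hp1
      rw [div_le_div_iff₀ hn0 (by linarith)]
      nlinarith [sq_nonneg ((n:ℝ) - 2)]
    have hmul : (n:ℝ) * (1 - t + ((n:ℝ) - 1) * p ^ ((n : ℝ) / (2 * (n : ℝ) - 2)))
        ≤ (n:ℝ) * P := by
      linarith [mul_le_mul_of_nonneg_left hee
          (mul_nonneg hn0.le (by linarith : (0:ℝ) ≤ (n:ℝ) - 1)), hSN, h4]
    exact le_of_mul_le_mul_left hmul hn0
end

section
/- Suppose the candidates satisfy p_k/t_k − p_{k+1}/t_{k+1} > 0 for some k with 1 ≤ k ≤ N−1, and let τ be the permutation interchanging positions k and k+1 (the (k+1)-th candidate is tried just before the k-th, all other candidates kept in order). Then the excess of the expected solving time is exactly EXC := E(τ) − E(id) = (p_k/t_k − p_{k+1}/t_{k+1}) · Q_{k−1} · t_k · t_{k+1}, where Q_{k−1} = ∏_{j=1}^{k−1} (1 − p_j). -/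
open Finset

lemma swap_sum_inv (f : ℕ → ℝ) (k m : ℕ) (hk : 1 ≤ k) (hm : m ≠ k) :
    ∑ l ∈ Finset.Icc 1 m, f (Equiv.swap k (k+1) l) = ∑ l ∈ Finset.Icc 1 m, f l := by
  refine Finset.sum_equiv (Equiv.swap k (k+1)) ?_ ?_
  · intro i
    simp only [Finset.mem_Icc, Equiv.swap_apply_def]
    split_ifs <;> omega
  · intro i _; rfl

lemma swap_prod_inv (f : ℕ → ℝ) (k m : ℕ) (hk : 1 ≤ k) (hm : m ≠ k) :
    ∏ l ∈ Finset.Icc 1 m, f (Equiv.swap k (k+1) l) = ∏ l ∈ Finset.Icc 1 m, f l := by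
  refine Finset.prod_equiv (Equiv.swap k (k+1)) ?_ ?_
  · intro i
    simp only [Finset.mem_Icc, Equiv.swap_apply_def]
    split_ifs <;> omega
  · intro i _; rfl

/-- If `p_k/t_k − p_{k+1}/t_{k+1} > 0`, then trying the `(k+1)`-th candidate just before the
`k`-th (all other candidates kept in order) yields the excess expected solving time
`EXC = E(τ) − E(id) = (p_k/t_k − p_{k+1}/t_{k+1}) · Q_{k−1} · t_k · t_{k+1}`,
where `Q_{k−1} = ∏_{j=1}^{k−1} (1 − p_j)` and `τ` interchanges positions `k` and `k+1`. -/
theorem excess_adjacent_swap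
    (N : ℕ) (hN : 1 ≤ N) (p t : ℕ → ℝ)
    (hp : ∀ i ∈ Finset.Icc 1 N, p i ∈ Set.Icc (0 : ℝ) 1)
    (ht : ∀ i ∈ Finset.Icc 1 N, 0 < t i)
    (k : ℕ) (hk1 : 1 ≤ k) (hk2 : k ≤ N - 1)
    (hpos : 0 < p k / t k - p (k + 1) / t (k + 1)) :
    solveTime N p t (Equiv.swap k (k + 1)) - solveTime N p t (Equiv.refl ℕ) =
      (p k / t k - p (k + 1) / t (k + 1)) *
        (∏ j ∈ Finset.Icc 1 (k - 1), (1 - p j)) * t k * t (k + 1) := by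
  have htk : t k ≠ 0 := ne_of_gt (ht k (by simp only [Finset.mem_Icc]; omega))
  have htk1 : t (k+1) ≠ 0 := ne_of_gt (ht (k+1) (by simp only [Finset.mem_Icc]; omega))
  set σ := Equiv.swap k (k+1) with hσ
  have hσk : σ k = k + 1 := Equiv.swap_apply_left _ _
  have hσk1 : σ (k+1) = k := Equiv.swap_apply_right _ _
  have hσfix : ∀ j, j ≠ k → j ≠ k + 1 → σ j = j := fun j h1 h2 =>
    Equiv.swap_apply_of_ne_of_ne h1 h2
  unfold solveTime
  rw [← Finset.sum_sub_distrib]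
  have hsub : ({k, k+1} : Finset ℕ) ⊆ Finset.Icc 1 N := by
    intro x hx
    simp only [Finset.mem_insert, Finset.mem_singleton] at hx
    simp only [Finset.mem_Icc]
    omega
  rw [← Finset.sum_subset hsub ?hz]
  case hz =>
    intro m hmN hm
    simp only [Finset.mem_insert, Finset.mem_singleton, not_or] at hm
    obtain ⟨hm1, hm2⟩ := hm
    have h1 : ∑ l ∈ Finset.Icc 1 m, t (σ l) = ∑ l ∈ Finset.Icc 1 m, t l :=
      swap_sum_inv t k m hk1 hm1
    have h2 : ∏ j ∈ Finset.Icc 1 (m-1), (1 - p (σ j)) =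
        ∏ j ∈ Finset.Icc 1 (m-1), (1 - p j) :=
      swap_prod_inv (fun j => 1 - p j) k (m-1) hk1 (by omega)
    rw [h1, h2, hσfix m hm1 hm2]
    simp
  rw [Finset.sum_pair (by omega : k ≠ k + 1)]
  -- evaluate pieces
  have hsum_k' : ∀ f : ℕ → ℝ, ∑ l ∈ Finset.Icc 1 (k-1), f (σ l) = ∑ l ∈ Finset.Icc 1 (k-1), f l := by
    intro f
    refine Finset.sum_congr rfl fun j hj => ?_
    simp only [Finset.mem_Icc] at hj
    rw [hσfix j (by omega) (by omega)]
  have hprod_k' : ∏ j ∈ Finset.Icc 1 (k-1), (1 - p (σ j)) = ∏ j ∈ Finset.Icc 1 (k-1), (1 - p j) := by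
    refine Finset.prod_congr rfl fun j hj => ?_
    simp only [Finset.mem_Icc] at hj
    rw [hσfix j (by omega) (by omega)]
  have hIk : Finset.Icc 1 k = insert k (Finset.Icc 1 (k-1)) := by
    ext x; simp only [Finset.mem_insert, Finset.mem_Icc]; omega
  have hIk1 : Finset.Icc 1 (k+1) = insert (k+1) (Finset.Icc 1 k) := by
    ext x; simp only [Finset.mem_insert, Finset.mem_Icc]; omega
  have hknot : k ∉ Finset.Icc 1 (k-1) := by simp only [Finset.mem_Icc]; omega
  have hk1not : k + 1 ∉ Finset.Icc 1 k := by simp only [Finset.mem_Icc]; omega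
  have hsumσk : ∑ l ∈ Finset.Icc 1 k, t (σ l) = t (k+1) + ∑ l ∈ Finset.Icc 1 (k-1), t l := by
    rw [hIk, Finset.sum_insert hknot, hσk, hsum_k' t]
  have hsumσk1 : ∑ l ∈ Finset.Icc 1 (k+1), t (σ l) = ∑ l ∈ Finset.Icc 1 (k+1), t l :=
    swap_sum_inv t k (k+1) hk1 (by omega)
  have hprodσk1 : ∏ j ∈ Finset.Icc 1 ((k+1)-1), (1 - p (σ j)) =
      (1 - p (k+1)) * ∏ j ∈ Finset.Icc 1 (k-1), (1 - p j) := by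
    have : (k+1) - 1 = k := by omega
    rw [this, hIk, Finset.prod_insert hknot, hσk, hprod_k']
  have hsumk1 : ∑ l ∈ Finset.Icc 1 (k+1), t l = t (k+1) + (t k + ∑ l ∈ Finset.Icc 1 (k-1), t l) := by
    rw [hIk1, Finset.sum_insert hk1not, hIk, Finset.sum_insert hknot]
  have hsumk : ∑ l ∈ Finset.Icc 1 k, t l = t k + ∑ l ∈ Finset.Icc 1 (k-1), t l := by
    rw [hIk, Finset.sum_insert hknot]
  have hprodk : ∏ j ∈ Finset.Icc 1 ((k+1)-1), (1 - p j) =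
      (1 - p k) * ∏ j ∈ Finset.Icc 1 (k-1), (1 - p j) := by
    have : (k+1) - 1 = k := by omega
    rw [this, hIk, Finset.prod_insert hknot]
  simp only [Equiv.refl_apply]
  rw [hσk, hσk1]
  rw [hsumσk, hsumσk1, hprodσk1, hprod_k', hsumk1, hsumk, hprodk]
  set T := ∑ l ∈ Finset.Icc 1 (k-1), t l
  set Q := ∏ j ∈ Finset.Icc 1 (k-1), (1 - p j)
  field_simp
  ring
end

section
/- Suppose p_k/t_k − p_{k+1}/t_{k+1} > 0 for some k with 3 ≤ k ≤ N−1, and set EXC = (p_k/t_k − p_{k+1}/t_{k+1}) · Q_{k−1} · t_k · t_{k+1}, which is the excess expected solving time caused by interchanging the k-th and (k+1)-th candidates. Then EXC ≥ (p_k/t_k − p_{k+1}/t_{k+1}) · t_k · t_{k+1} · (1 − S_{k−1} + (k−2) · (P_{k−1})^{(k−1)/(2k−4)}). -/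
open Finset

private lemma prod_le_of_mem' (s : Finset ℕ) (f : ℕ → ℝ) (h0 : ∀ i ∈ s, 0 ≤ f i)
    (h1 : ∀ i ∈ s, f i ≤ 1) {j : ℕ} (hj : j ∈ s) : ∏ i ∈ s, f i ≤ f j := by
  rw [← Finset.mul_prod_erase s f hj]
  have h2 : ∏ i ∈ s.erase j, f i ≤ 1 :=
    Finset.prod_le_one (fun i hi => h0 i (Finset.mem_of_mem_erase hi))
      (fun i hi => h1 i (Finset.mem_of_mem_erase hi))
  have h3 := mul_le_mul_of_nonneg_left h2 (h0 j hj)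
  simpa using h3

private lemma prod_one_sub_eq (p : ℕ → ℝ) (m : ℕ) :
    ∏ i ∈ Icc 1 m, (1 - p i)
      = 1 - ∑ i ∈ Icc 1 m, p i * ∏ j ∈ Icc 1 (i - 1), (1 - p j) := by
  induction m with
  | zero => simp
  | succ n ih =>
    rw [Finset.prod_Icc_succ_top (Nat.le_add_left 1 n),
      Finset.sum_Icc_succ_top (Nat.le_add_left 1 n)]
    simp only [Nat.add_sub_cancel]
    rw [ih]
    ring

private lemma key_ineq (m : ℕ) (hm : 2 ≤ m) (p : ℕ → ℝ)
    (hp0 : ∀ i ∈ Icc 1 m, 0 ≤ p i) (hp1 : ∀ i ∈ Icc 1 m, p i ≤ 1) :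
    1 - (∑ i ∈ Icc 1 m, p i)
      + ((m : ℝ) - 1) * (∏ i ∈ Icc 1 m, p i) ^ ((m : ℝ) / (2 * (m : ℝ) - 2))
      ≤ ∏ i ∈ Icc 1 m, (1 - p i) := by
  rcases Nat.lt_or_ge m 3 with hm3 | hm3
  · -- m = 2
    have hm2 : m = 2 := by omega
    subst hm2
    have h12 : Icc 1 2 = {1, 2} := rfl
    have e1 : ((2:ℕ):ℝ) / (2 * ((2:ℕ):ℝ) - 2) = 1 := by norm_num
    rw [h12, e1]
    have h01 := hp0 1 (by decide)
    have h02 := hp0 2 (by decide)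
    rw [Finset.prod_pair (by norm_num), Finset.sum_pair (by norm_num),
      Finset.prod_pair (by norm_num), Real.rpow_one]
    push_cast
    nlinarith
  · -- m ≥ 3
    have hm1 : 1 ∈ Icc 1 m := by simp [Finset.mem_Icc]; omega
    have hmm : m ∈ Icc 1 m := by simp [Finset.mem_Icc]; omega
    have hmR : (3:ℝ) ≤ (m:ℝ) := by exact_mod_cast hm3
    have hmpos : (0:ℝ) < (m:ℝ) - 1 := by linarith
    set P := ∏ i ∈ Icc 1 m, p i with hPdef
    have hP0 : 0 ≤ P := Finset.prod_nonneg hp0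
    set a : ℕ → ℝ := fun i => p i * Real.sqrt (p 1 * p (i - 1)) with hadef
    have hsplit : Icc 1 m = insert 1 (Icc 2 m) := by
      ext x; simp only [Finset.mem_Icc, Finset.mem_insert]; omega
    have ha0 : ∀ i ∈ Icc 2 m, 0 ≤ a i := by
      intro i hi
      obtain ⟨hi2, him⟩ := Finset.mem_Icc.mp hi
      exact mul_nonneg (hp0 i (Finset.mem_Icc.mpr ⟨by omega, him⟩)) (Real.sqrt_nonneg _)
    -- Step A : sum lower bound
    have hstep1 : ∑ i ∈ Icc 2 m, a i
        ≤ ∑ i ∈ Icc 1 m, p i * (1 - ∏ j ∈ Icc 1 (i - 1), (1 - p j)) := by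
      rw [hsplit, Finset.sum_insert (by simp)]
      have h1 : p 1 * (1 - ∏ j ∈ Icc 1 (1 - 1), (1 - p j)) = 0 := by norm_num
      rw [h1, zero_add]
      apply Finset.sum_le_sum
      intro i hi
      obtain ⟨hi2, him⟩ := Finset.mem_Icc.mp hi
      have hpi0 : 0 ≤ p i := hp0 i (Finset.mem_Icc.mpr ⟨by omega, him⟩)
      have hsub : Icc 1 (i - 1) ⊆ Icc 1 m := Finset.Icc_subset_Icc le_rfl (by omega)
      have hf0 : ∀ j ∈ Icc 1 (i - 1), (0:ℝ) ≤ 1 - p j := fun j hj => by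
        have := hp1 j (hsub hj); linarith
      have hf1 : ∀ j ∈ Icc 1 (i - 1), (1:ℝ) - p j ≤ 1 := fun j hj => by
        have := hp0 j (hsub hj); linarith
      have hle1 : ∏ j ∈ Icc 1 (i - 1), (1 - p j) ≤ 1 - p 1 :=
        prod_le_of_mem' _ _ hf0 hf1 (Finset.mem_Icc.mpr ⟨le_rfl, by omega⟩)
      have hle2 : ∏ j ∈ Icc 1 (i - 1), (1 - p j) ≤ 1 - p (i - 1) :=
        prod_le_of_mem' _ _ hf0 hf1 (Finset.mem_Icc.mpr ⟨by omega, le_rfl⟩)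
      have hq1 : 0 ≤ p 1 := hp0 1 hm1
      have hq2 : 0 ≤ p (i - 1) := hp0 _ (Finset.mem_Icc.mpr ⟨by omega, by omega⟩)
      have hsq : Real.sqrt (p 1 * p (i - 1)) ≤ 1 - ∏ j ∈ Icc 1 (i - 1), (1 - p j) := by
        have hnn : (0:ℝ) ≤ 1 - ∏ j ∈ Icc 1 (i - 1), (1 - p j) := by linarith
        have h5 : Real.sqrt (p 1 * p (i - 1))
            ≤ Real.sqrt ((1 - ∏ j ∈ Icc 1 (i - 1), (1 - p j)) ^ 2) := by
          apply Real.sqrt_le_sqrt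
          nlinarith
        rwa [Real.sqrt_sq hnn] at h5
      exact mul_le_mul_of_nonneg_left hsq hpi0
    -- Step B : product of the a i
    set G := ∏ i ∈ Icc 2 m, a i with hGdef
    have hG0 : 0 ≤ G := Finset.prod_nonneg ha0
    have hre : ∏ i ∈ Icc 2 m, p (i - 1) = ∏ j ∈ Icc 1 (m - 1), p j := by
      apply Finset.prod_nbij' (fun i => i - 1) (fun j => j + 1) <;>
        intros a ha <;> simp only [Finset.mem_Icc] at * <;> omega
    have hcard : (Icc 2 m).card = m - 1 := by
      rw [Nat.card_Icc]; omega
    have hG2 : G ^ 2 = (∏ i ∈ Icc 2 m, p i) ^ 2 * p 1 ^ (m - 1)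
        * ∏ j ∈ Icc 1 (m - 1), p j := by
      rw [hGdef, ← Finset.prod_pow]
      have he : ∀ i ∈ Icc 2 m, a i ^ 2 = p i ^ 2 * (p 1 * p (i - 1)) := by
        intro i hi
        obtain ⟨hi2, him⟩ := Finset.mem_Icc.mp hi
        have hq1 : 0 ≤ p 1 := hp0 1 hm1
        have hq2 : 0 ≤ p (i - 1) := hp0 _ (Finset.mem_Icc.mpr ⟨by omega, by omega⟩)
        rw [hadef]
        simp only
        rw [mul_pow, Real.sq_sqrt (mul_nonneg hq1 hq2)]
      rw [Finset.prod_congr rfl he, Finset.prod_mul_distrib, Finset.prod_mul_distrib,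
        Finset.prod_pow, Finset.prod_const, hcard, hre]
      ring
    have hA : P = p 1 * ∏ i ∈ Icc 2 m, p i := by
      rw [hPdef, hsplit, Finset.prod_insert (by simp)]
    have hB : P = (∏ j ∈ Icc 1 (m - 1), p j) * p m := by
      have h6 := Finset.prod_Icc_succ_top (a := 1) (b := m - 1) (by omega) p
      have hm1' : m - 1 + 1 = m := by omega
      rw [hm1'] at h6
      rw [hPdef, h6]
    have hq1 : 0 ≤ p 1 := hp0 1 hm1
    have hA1 : ∏ i ∈ Icc 2 m, p i ≤ 1 :=
      Finset.prod_le_one (fun i hi => hp0 i (hsplit ▸ Finset.mem_insert_of_mem hi))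
        (fun i hi => hp1 i (hsplit ▸ Finset.mem_insert_of_mem hi))
    have hA0' : 0 ≤ ∏ i ∈ Icc 2 m, p i :=
      Finset.prod_nonneg (fun i hi => hp0 i (hsplit ▸ Finset.mem_insert_of_mem hi))
    have hB0 : 0 ≤ ∏ j ∈ Icc 1 (m - 1), p j :=
      Finset.prod_nonneg (fun j hj => hp0 j (Finset.Icc_subset_Icc le_rfl (by omega) hj))
    have hPp1 : P ≤ p 1 := by
      rw [hA]
      calc p 1 * ∏ i ∈ Icc 2 m, p i ≤ p 1 * 1 := mul_le_mul_of_nonneg_left hA1 hq1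
        _ = p 1 := mul_one _
    have hPB : P ≤ ∏ j ∈ Icc 1 (m - 1), p j := by
      rw [hB]
      calc (∏ j ∈ Icc 1 (m - 1), p j) * p m
          ≤ (∏ j ∈ Icc 1 (m - 1), p j) * 1 :=
            mul_le_mul_of_nonneg_left (hp1 m hmm) hB0
        _ = _ := mul_one _
    have hG2' : G ^ 2 = P ^ 2 * p 1 ^ (m - 3) * ∏ j ∈ Icc 1 (m - 1), p j := by
      rw [hG2, hA, mul_pow, show m - 1 = m - 3 + 2 by omega, pow_add]
      ring
    have hPG : P ^ m ≤ G ^ 2 := by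
      calc P ^ m = P ^ 2 * P ^ (m - 3) * P ^ 1 := by
            rw [← pow_add, ← pow_add]; congr 1; omega
        _ ≤ P ^ 2 * p 1 ^ (m - 3) * ∏ j ∈ Icc 1 (m - 1), p j := by
            rw [pow_one]
            have c1 : P ^ (m - 3) ≤ p 1 ^ (m - 3) := pow_le_pow_left₀ hP0 hPp1 _
            have c2 : P ^ 2 * P ^ (m - 3) ≤ P ^ 2 * p 1 ^ (m - 3) :=
              mul_le_mul_of_nonneg_left c1 (pow_nonneg hP0 2)
            exact mul_le_mul c2 hPB hP0
              (mul_nonneg (pow_nonneg hP0 2) (pow_nonneg hq1 _))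
        _ = G ^ 2 := hG2'.symm
    -- Step D : sqrt
    have hsqG : P ^ ((m:ℝ) / 2) ≤ G := by
      have h7 : Real.sqrt (P ^ m) ≤ Real.sqrt (G ^ 2) := Real.sqrt_le_sqrt hPG
      rw [Real.sqrt_sq hG0] at h7
      have h8 : Real.sqrt (P ^ m) = P ^ ((m:ℝ) / 2) := by
        rw [Real.sqrt_eq_rpow, ← Real.rpow_natCast P m, ← Real.rpow_mul hP0]
        congr 1; ring
      rwa [h8] at h7
    -- Step E : AM-GM
    have hw0 : ∀ i ∈ Icc 2 m, (0:ℝ) ≤ 1 / ((m:ℝ) - 1) := fun i _ => by positivity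
    have hwsum : ∑ _i ∈ Icc 2 m, (1 / ((m:ℝ) - 1)) = 1 := by
      rw [Finset.sum_const, hcard, nsmul_eq_mul, Nat.cast_sub (by omega)]
      push_cast
      field_simp
    have hamgm := Real.geom_mean_le_arith_mean_weighted (Icc 2 m)
      (fun _ => 1 / ((m:ℝ) - 1)) a hw0 hwsum ha0
    rw [Real.finset_prod_rpow _ _ ha0 _, ← Finset.mul_sum] at hamgm
    have hsum_ge : ((m:ℝ) - 1) * G ^ ((1:ℝ) / ((m:ℝ) - 1)) ≤ ∑ i ∈ Icc 2 m, a i := by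
      calc ((m:ℝ) - 1) * G ^ ((1:ℝ) / ((m:ℝ) - 1))
          ≤ ((m:ℝ) - 1) * (1 / ((m:ℝ) - 1) * ∑ i ∈ Icc 2 m, a i) :=
            mul_le_mul_of_nonneg_left hamgm hmpos.le
        _ = ∑ i ∈ Icc 2 m, a i := by field_simp
    -- Step F : rpow manipulation
    have hr : P ^ ((m:ℝ) / (2 * (m:ℝ) - 2)) ≤ G ^ ((1:ℝ) / ((m:ℝ) - 1)) := by
      have h3 := Real.rpow_le_rpow (Real.rpow_nonneg hP0 _) hsqG
        (le_of_lt (one_div_pos.mpr hmpos))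
      rw [← Real.rpow_mul hP0] at h3
      have h4 : ((m:ℝ) / 2) * (1 / ((m:ℝ) - 1)) = (m:ℝ) / (2 * (m:ℝ) - 2) := by
        rw [div_mul_div_comm, mul_one]
        congr 1
        ring
      rwa [h4] at h3
    -- assemble
    have hkey : ((m:ℝ) - 1) * P ^ ((m:ℝ) / (2 * (m:ℝ) - 2))
        ≤ ∑ i ∈ Icc 1 m, p i * (1 - ∏ j ∈ Icc 1 (i - 1), (1 - p j)) :=
      le_trans (le_trans (mul_le_mul_of_nonneg_left hr hmpos.le) hsum_ge) hstep1
    have hid := prod_one_sub_eq p m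
    have hexp : ∑ i ∈ Icc 1 m, p i * (1 - ∏ j ∈ Icc 1 (i - 1), (1 - p j))
        = (∑ i ∈ Icc 1 m, p i) - (1 - ∏ i ∈ Icc 1 m, (1 - p i)) := by
      simp only [mul_one_sub]
      rw [Finset.sum_sub_distrib, hid]
      ring
    rw [hexp] at hkey
    linarith

/-- Lower bound on the excess expected solving time
`EXC = (p_k/t_k − p_{k+1}/t_{k+1}) · Q_{k−1} · t_k · t_{k+1}` caused by interchanging the
`k`-th and `(k+1)`-th candidates (for `3 ≤ k ≤ N−1`):
`EXC ≥ (p_k/t_k − p_{k+1}/t_{k+1}) · t_k · t_{k+1} · (1 − S_{k−1} + (k−2) · P_{k−1}^{(k−1)/(2k−4)})`,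
where `S_{k−1} = Σ_{i=1}^{k−1} p_i`, `P_{k−1} = ∏_{i=1}^{k−1} p_i`,
`Q_{k−1} = ∏_{i=1}^{k−1} (1 − p_i)`, and the exponent is a real power. -/
theorem excess_lower_bound
    (N : ℕ) (hN : 1 ≤ N) (p t : ℕ → ℝ)
    (hp : ∀ i ∈ Finset.Icc 1 N, p i ∈ Set.Icc (0 : ℝ) 1)
    (ht : ∀ i ∈ Finset.Icc 1 N, 0 < t i)
    (k : ℕ) (hk1 : 3 ≤ k) (hk2 : k ≤ N - 1)
    (hpos : 0 < p k / t k - p (k + 1) / t (k + 1)) :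
    (p k / t k - p (k + 1) / t (k + 1)) *
        (∏ i ∈ Finset.Icc 1 (k - 1), (1 - p i)) * t k * t (k + 1) ≥
      (p k / t k - p (k + 1) / t (k + 1)) * (t k * t (k + 1)) *
        (1 - (∑ i ∈ Finset.Icc 1 (k - 1), p i) +
          ((k : ℝ) - 2) *
            (∏ i ∈ Finset.Icc 1 (k - 1), p i) ^ (((k : ℝ) - 1) / (2 * (k : ℝ) - 4))) := by
  have hkN : k + 1 ≤ N := by omega
  have htk : 0 < t k := ht k (Finset.mem_Icc.mpr ⟨by omega, by omega⟩)
  have htk1 : 0 < t (k + 1) := ht (k + 1) (Finset.mem_Icc.mpr ⟨by omega, by omega⟩)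
  have hsub : Finset.Icc 1 (k - 1) ⊆ Finset.Icc 1 N :=
    Finset.Icc_subset_Icc le_rfl (by omega)
  have hkey := key_ineq (k - 1) (by omega) p
    (fun i hi => (hp i (hsub hi)).1) (fun i hi => (hp i (hsub hi)).2)
  have hc1 : ((k - 1 : ℕ) : ℝ) = (k : ℝ) - 1 := by
    rw [Nat.cast_sub (by omega)]; norm_num
  rw [hc1] at hkey
  have hc2 : (k : ℝ) - 1 - 1 = (k : ℝ) - 2 := by ring
  have hc3 : (k : ℝ) - 1 = (k : ℝ) - 1 := rfl
  have hc4 : 2 * ((k : ℝ) - 1) - 2 = 2 * (k : ℝ) - 4 := by ring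
  rw [hc2, hc4] at hkey
  have hc : 0 < (p k / t k - p (k + 1) / t (k + 1)) * (t k * t (k + 1)) :=
    mul_pos hpos (mul_pos htk htk1)
  rw [ge_iff_le]
  calc (p k / t k - p (k + 1) / t (k + 1)) * (t k * t (k + 1)) *
        (1 - (∑ i ∈ Finset.Icc 1 (k - 1), p i) +
          ((k : ℝ) - 2) *
            (∏ i ∈ Finset.Icc 1 (k - 1), p i) ^ (((k : ℝ) - 1) / (2 * (k : ℝ) - 4)))
      ≤ (p k / t k - p (k + 1) / t (k + 1)) * (t k * t (k + 1)) *
          ∏ i ∈ Finset.Icc 1 (k - 1), (1 - p i) :=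
        mul_le_mul_of_nonneg_left hkey hc.le
    _ = (p k / t k - p (k + 1) / t (k + 1)) *
        (∏ i ∈ Finset.Icc 1 (k - 1), (1 - p i)) * t k * t (k + 1) := by ring
end

section
/- Let 1 ≤ k and 1 ≤ n with k+n ≤ N, suppose p_k < 1, and let τ be the permutation of {1,…,N} interchanging positions k and k+n. Then the increase in expected solving time caused by this interchange equals exactly E(τ) − E(id) = q_1 + q_2 + q_3, where q_1 = T_{k−1}·Q_{k−1}·(p_{k+n} − p_k) + Q_{k−1}·(t_{k+n}·p_{k+n} − t_k·p_k), q_2 = Σ_{l=k+1}^{k+n−1} Q_{l−1}·p_l·( T_l·(p_k − p_{k+n})/(1 − p_k) + (t_{k+n} − t_k)·(1 − p_{k+n})/(1 − p_k) ), and q_3 = T_{k+n}·Q_{k+n−1}·(p_k − p_{k+n})/(1 − p_k). -/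
open Finset

/-- `q_1 = T_{k−1}·Q_{k−1}·(p_{k+n} − p_k) + Q_{k−1}·(t_{k+n}·p_{k+n} − t_k·p_k)`. -/
noncomputable def q1 (p t : ℕ → ℝ) (k n : ℕ) : ℝ :=
  (∑ i ∈ Finset.Icc 1 (k - 1), t i) * (∏ i ∈ Finset.Icc 1 (k - 1), (1 - p i)) *
      (p (k + n) - p k) +
    (∏ i ∈ Finset.Icc 1 (k - 1), (1 - p i)) * (t (k + n) * p (k + n) - t k * p k)

/-- `q_2 = Σ_{l=k+1}^{k+n−1} Q_{l−1}·p_l·(T_l·(p_k − p_{k+n})/(1 − p_k)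
      + (t_{k+n} − t_k)·(1 − p_{k+n})/(1 − p_k))`. -/
noncomputable def q2 (p t : ℕ → ℝ) (k n : ℕ) : ℝ :=
  ∑ l ∈ Finset.Icc (k + 1) (k + n - 1),
    (∏ i ∈ Finset.Icc 1 (l - 1), (1 - p i)) * p l *
      ((∑ i ∈ Finset.Icc 1 l, t i) * (p k - p (k + n)) / (1 - p k) +
        (t (k + n) - t k) * (1 - p (k + n)) / (1 - p k))

/-- `q_3 = T_{k+n}·Q_{k+n−1}·(p_k − p_{k+n})/(1 − p_k)`. -/
noncomputable def q3 (p t : ℕ → ℝ) (k n : ℕ) : ℝ :=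
  (∑ i ∈ Finset.Icc 1 (k + n), t i) * (∏ i ∈ Finset.Icc 1 (k + n - 1), (1 - p i)) *
    (p k - p (k + n)) / (1 - p k)

/-- The increase in expected solving time caused by interchanging the `k`-th and `(k+n)`-th
candidates equals exactly `E(τ) − E(id) = q_1 + q_2 + q_3`, where `τ` is the permutation
interchanging positions `k` and `k+n`. -/
theorem excess_general_swap
    (N : ℕ) (hN : 1 ≤ N) (p t : ℕ → ℝ)
    (hp : ∀ i ∈ Finset.Icc 1 N, p i ∈ Set.Icc (0 : ℝ) 1)
    (ht : ∀ i ∈ Finset.Icc 1 N, 0 < t i)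
    (k n : ℕ) (hk : 1 ≤ k) (hn : 1 ≤ n) (hkn : k + n ≤ N)
    (hpk : p k < 1) :
    solveTime N p t (Equiv.swap k (k + n)) - solveTime N p t (Equiv.refl ℕ) =
      q1 p t k n + q2 p t k n + q3 p t k n := by
  have hpa : (1 : ℝ) - p k ≠ 0 := by linarith
  set σ : Equiv.Perm ℕ := Equiv.swap k (k + n) with hσdef
  have hσo : ∀ j, j ≠ k → j ≠ k + n → σ j = j := fun j h1 h2 =>
    Equiv.swap_apply_of_ne_of_ne h1 h2
  have hσk : σ k = k + n := Equiv.swap_apply_left _ _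
  have hσb : σ (k + n) = k := Equiv.swap_apply_right _ _
  set F : ℕ → ℝ := fun m =>
    (∑ l ∈ Finset.Icc 1 m, t (σ l)) * (∏ j ∈ Finset.Icc 1 (m - 1), (1 - p (σ j))) * p (σ m) -
      (∑ l ∈ Finset.Icc 1 m, t l) * (∏ j ∈ Finset.Icc 1 (m - 1), (1 - p j)) * p m with hF
  have hmain : solveTime N p t σ - solveTime N p t (Equiv.refl ℕ) =
      ∑ m ∈ Finset.Icc 1 N, F m := by
    simp only [solveTime, Equiv.refl_apply, hF, Finset.sum_sub_distrib]
  rw [hmain]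
  -- sums over Icc 1 c when only k is moved inside
  have hsum_mid : ∀ c, k ≤ c → c < k + n →
      ∑ l ∈ Finset.Icc 1 c, t (σ l) = (∑ l ∈ Finset.Icc 1 c, t l) - t k + t (k + n) := by
    intro c h1 h2
    have hkmem : k ∈ Finset.Icc 1 c := by simp [Finset.mem_Icc]; omega
    rw [← Finset.add_sum_erase _ (fun l => t (σ l)) hkmem]
    have e2 : ∑ l ∈ (Finset.Icc 1 c).erase k, t (σ l) =
        ∑ l ∈ (Finset.Icc 1 c).erase k, t l := by
      refine Finset.sum_congr rfl fun x hx => ?_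
      simp only [Finset.mem_erase, Finset.mem_Icc] at hx
      rw [hσo x hx.1 (by omega)]
    rw [e2, Finset.sum_erase_eq_sub hkmem, hσk]; ring
  have hprod_mid : ∀ c, k ≤ c → c < k + n →
      (∏ j ∈ Finset.Icc 1 c, (1 - p (σ j))) =
        (1 - p (k + n)) * ∏ j ∈ (Finset.Icc 1 c).erase k, (1 - p j) := by
    intro c h1 h2
    have hkmem : k ∈ Finset.Icc 1 c := by simp [Finset.mem_Icc]; omega
    rw [← Finset.mul_prod_erase _ (fun j => 1 - p (σ j)) hkmem, hσk]
    congr 1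
    refine Finset.prod_congr rfl fun x hx => ?_
    simp only [Finset.mem_erase, Finset.mem_Icc] at hx
    rw [hσo x hx.1 (by omega)]
  have hprod_id : ∀ c, k ≤ c →
      (∏ j ∈ Finset.Icc 1 c, (1 - p j)) =
        (1 - p k) * ∏ j ∈ (Finset.Icc 1 c).erase k, (1 - p j) := by
    intro c h1
    have hkmem : k ∈ Finset.Icc 1 c := by simp [Finset.mem_Icc]; omega
    rw [← Finset.mul_prod_erase _ (fun j => 1 - p j) hkmem]
  -- restrict the sum to Icc k (k+n)
  have hsub : Finset.Icc k (k + n) ⊆ Finset.Icc 1 N := by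
    intro x hx; simp only [Finset.mem_Icc] at *; omega
  have hzero : ∀ m ∈ Finset.Icc 1 N, m ∉ Finset.Icc k (k + n) → F m = 0 := by
    intro m hm hm'
    simp only [Finset.mem_Icc] at hm hm'
    have hcase : m < k ∨ k + n < m := by omega
    simp only [hF]
    rcases hcase with h | h
    · have e1 : ∑ l ∈ Finset.Icc 1 m, t (σ l) = ∑ l ∈ Finset.Icc 1 m, t l := by
        refine Finset.sum_congr rfl fun x hx => ?_
        simp only [Finset.mem_Icc] at hx
        rw [hσo x (by omega) (by omega)]
      have e2 : ∏ j ∈ Finset.Icc 1 (m - 1), (1 - p (σ j)) =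
          ∏ j ∈ Finset.Icc 1 (m - 1), (1 - p j) := by
        refine Finset.prod_congr rfl fun x hx => ?_
        simp only [Finset.mem_Icc] at hx
        rw [hσo x (by omega) (by omega)]
      rw [e1, e2, hσo m (by omega) (by omega)]; ring
    · have hss : ∀ c, k + n ≤ c → ({a | σ a ≠ a} : Set ℕ) ⊆ ↑(Finset.Icc 1 c) := by
        intro c hc x hx
        simp only [Set.mem_setOf_eq] at hx
        have : x = k ∨ x = k + n := by
          by_contra hcon
          push_neg at hcon
          exact hx (hσo x hcon.1 hcon.2)
        simp only [Finset.coe_Icc, Set.mem_Icc]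
        omega
      rw [Equiv.Perm.sum_comp σ (Finset.Icc 1 m) t (hss m (by omega)),
        Equiv.Perm.prod_comp σ (Finset.Icc 1 (m - 1)) (fun j => (1 : ℝ) - p j)
          (hss (m - 1) (by omega)),
        hσo m (by omega) (by omega)]
      ring
  rw [← Finset.sum_subset hsub hzero]
  have hsplit : Finset.Icc k (k + n) =
      insert k (insert (k + n) (Finset.Icc (k + 1) (k + n - 1))) := by
    ext x
    simp only [Finset.mem_Icc, Finset.mem_insert]
    omega
  rw [hsplit, Finset.sum_insert (by simp [Finset.mem_Icc]; omega),
    Finset.sum_insert (by simp [Finset.mem_Icc]; omega)]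
  -- F k = q1
  have herase : (Finset.Icc 1 k).erase k = Finset.Icc 1 (k - 1) := by
    ext x; simp only [Finset.mem_erase, Finset.mem_Icc]; omega
  have hq1 : F k = q1 p t k n := by
    simp only [hF]
    have e1 : ∑ l ∈ Finset.Icc 1 k, t (σ l) =
        (∑ l ∈ Finset.Icc 1 k, t l) - t k + t (k + n) := hsum_mid k le_rfl (by omega)
    have e1' : ∑ l ∈ Finset.Icc 1 k, t l = (∑ l ∈ Finset.Icc 1 (k - 1), t l) + t k := by
      rw [← herase, Finset.sum_erase_eq_sub (by simp [Finset.mem_Icc]; omega)]; ring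
    have e2 : ∏ j ∈ Finset.Icc 1 (k - 1), (1 - p (σ j)) =
        ∏ j ∈ Finset.Icc 1 (k - 1), (1 - p j) := by
      refine Finset.prod_congr rfl fun x hx => ?_
      simp only [Finset.mem_Icc] at hx
      rw [hσo x (by omega) (by omega)]
    rw [e1, e1', e2, hσk, q1]; ring
  -- F (k+n) = q3
  have hq3 : F (k + n) = q3 p t k n := by
    simp only [hF]
    have hss : ({a | σ a ≠ a} : Set ℕ) ⊆ ↑(Finset.Icc 1 (k + n)) := by
      intro x hx
      simp only [Set.mem_setOf_eq] at hx
      have : x = k ∨ x = k + n := by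
        by_contra hcon
        push_neg at hcon
        exact hx (hσo x hcon.1 hcon.2)
      simp only [Finset.coe_Icc, Set.mem_Icc]
      omega
    rw [Equiv.Perm.sum_comp σ (Finset.Icc 1 (k + n)) t hss, hσb, q3,
      hprod_mid (k + n - 1) (by omega) (by omega),
      hprod_id (k + n - 1) (by omega)]
    field_simp
    ring
  -- the middle sum = q2
  have hq2 : ∑ m ∈ Finset.Icc (k + 1) (k + n - 1), F m = q2 p t k n := by
    rw [q2]
    refine Finset.sum_congr rfl fun m hm => ?_
    simp only [Finset.mem_Icc] at hm
    simp only [hF]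
    rw [hsum_mid m (by omega) (by omega),
      hprod_mid (m - 1) (by omega) (by omega),
      hprod_id (m - 1) (by omega),
      hσo m (by omega) (by omega)]
    field_simp
    ring
  rw [hq1, hq3, hq2]
  ring
end

section
/- Let c, d ∈ (0,1) with c ≤ p_i ≤ d for each i = 1,…,N, and let 0 ≤ t_i ≤ T for each i and some T. Let 1 ≤ k, 1 ≤ n with k+n ≤ N. Then EXC = q_1 + q_2 + q_3 satisfies EXC ≤ T · ((1 − p_{k+n})/(1 − p_k)) · (d/c) · (1−c)^k · (A − B·(1−c)^{n−1}), where A = 1 + 1/c + k + ((1 − p_k)/(1 − p_{k+n})) · c·k/(1−c) and B = (1 − c/d)·(k+n) + 1/c. -/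
/-!
Bound every factor crudely: `Q_m ≤ (1 - c)^m`, `T_m ≤ m T`, `p_l ≤ d` and
`p_k - p_{k+n} ≤ d (1 - p_{k+n})`. Then `q_1 ≤ T d k (1 - c)^(k-1)`, while `q_2 + q_3` is at most
`T (1 - p_{k+n}) / (1 - p_k) · d` times the weighted geometric sum
`Σ_{l=k+1}^{k+n-1} (d l + 1) (1 - c)^(l-1) + (k + n) (1 - c)^(k+n-1)`. Induction on `n` bounds that
sum by a closed form, and the claimed bound is an algebraic rearrangement of the result.
-/

open Finset

section

variable {p t : ℕ → ℝ} {c d T : ℝ} {k n M m : ℕ}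

lemma prod_Icc_one_sub_bounds (hp : ∀ i ∈ Icc 1 M, c ≤ p i ∧ p i ≤ d) (hd : d ≤ 1)
    (hm : m ≤ M) : 0 ≤ ∏ i ∈ Icc 1 m, (1 - p i) ∧ ∏ i ∈ Icc 1 m, (1 - p i) ≤ (1 - c) ^ m := by
  have hp' : ∀ i ∈ Icc 1 m, c ≤ p i ∧ p i ≤ 1 := fun i hi =>
    have h := hp i (Icc_subset_Icc_right hm hi)
    ⟨h.1, h.2.trans hd⟩
  refine ⟨prod_nonneg fun i hi => sub_nonneg.2 (hp' i hi).2, ?_⟩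
  calc ∏ i ∈ Icc 1 m, (1 - p i) ≤ ∏ _i ∈ Icc 1 m, (1 - c) :=
        prod_le_prod (fun i hi => sub_nonneg.2 (hp' i hi).2) fun i hi => by linarith [hp' i hi]
    _ = (1 - c) ^ m := by simp

lemma sum_Icc_bounds (ht : ∀ i ∈ Icc 1 M, 0 ≤ t i ∧ t i ≤ T) (hm : m ≤ M) :
    0 ≤ ∑ i ∈ Icc 1 m, t i ∧ ∑ i ∈ Icc 1 m, t i ≤ m * T := by
  have ht' : ∀ i ∈ Icc 1 m, 0 ≤ t i ∧ t i ≤ T := fun i hi => ht i (Icc_subset_Icc_right hm hi)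
  refine ⟨sum_nonneg fun i hi => (ht' i hi).1, ?_⟩
  simpa using sum_le_card_nsmul _ _ _ fun i hi => (ht' i hi).2

lemma sub_le_mul_one_sub {a b : ℝ} (ha : a ≤ d) (hb : 0 ≤ b) (hd : d ≤ 1) :
    a - b ≤ d * (1 - b) := by
  nlinarith

lemma q1_le (hp : ∀ i ∈ Icc 1 (k + n), c ≤ p i ∧ p i ≤ d)
    (ht : ∀ i ∈ Icc 1 (k + n), 0 ≤ t i ∧ t i ≤ T) (hc : 0 ≤ c) (hd : d ≤ 1) (hk : 1 ≤ k) :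
    q1 p t k n ≤ T * d * k * (1 - c) ^ (k - 1) := by
  have hkmem : k ∈ Icc 1 (k + n) := mem_Icc.2 ⟨hk, k.le_add_right n⟩
  have hknmem : k + n ∈ Icc 1 (k + n) := mem_Icc.2 ⟨by omega, le_rfl⟩
  obtain ⟨hQ0, hQ⟩ := prod_Icc_one_sub_bounds (m := k - 1) hp hd (by omega)
  obtain ⟨hS0, hS⟩ := sum_Icc_bounds (m := k - 1) ht (by omega)
  have hT : 0 ≤ T := (ht k hkmem).1.trans (ht k hkmem).2
  have hx : 0 ≤ (1 - c) ^ (k - 1) := hQ0.trans hQ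
  have hcd : c ≤ d := (hp k hkmem).1.trans (hp k hkmem).2
  have hdp : p (k + n) - p k ≤ d - c := by linarith [hp k hkmem, hp (k + n) hknmem]
  have hdtp : t (k + n) * p (k + n) - t k * p k ≤ T * d := by
    have := mul_le_mul_of_nonneg (ht (k + n) hknmem).2 (hp (k + n) hknmem).2
      (ht (k + n) hknmem).1 (hc.trans hcd)
    nlinarith [mul_nonneg (ht k hkmem).1 (hc.trans (hp k hkmem).1)]
  calc q1 p t k n
      ≤ ((k - 1 : ℕ) * T * (1 - c) ^ (k - 1)) * (d - c) + (1 - c) ^ (k - 1) * (T * d) :=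
        add_le_add (mul_le_mul_of_nonneg (mul_le_mul_of_nonneg hS hQ hS0 hx) hdp
          (mul_nonneg hS0 hQ0) (by linarith))
          (mul_le_mul_of_nonneg hQ hdtp hQ0 (mul_nonneg hT (hc.trans hcd)))
    _ ≤ T * d * k * (1 - c) ^ (k - 1) := by
        rw [Nat.cast_sub hk, Nat.cast_one]
        have hk1 : (0 : ℝ) ≤ k - 1 := by rw [sub_nonneg]; exact_mod_cast hk
        nlinarith [mul_nonneg (mul_nonneg (mul_nonneg hk1 hT) hx) hc]

lemma q2_le (hp : ∀ i ∈ Icc 1 (k + n), c ≤ p i ∧ p i ≤ d)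
    (ht : ∀ i ∈ Icc 1 (k + n), 0 ≤ t i ∧ t i ≤ T) (hc : 0 ≤ c) (hd : d < 1) (hk : 1 ≤ k) :
    q2 p t k n ≤ T * ((1 - p (k + n)) / (1 - p k)) * d *
      (d * ∑ l ∈ Icc (k + 1) (k + n - 1), (l : ℝ) * (1 - c) ^ (l - 1) +
        ∑ l ∈ Icc (k + 1) (k + n - 1), (1 - c) ^ (l - 1)) := by
  have hkmem : k ∈ Icc 1 (k + n) := mem_Icc.2 ⟨hk, k.le_add_right n⟩
  have hknmem : k + n ∈ Icc 1 (k + n) := mem_Icc.2 ⟨by omega, le_rfl⟩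
  have hT : 0 ≤ T := (ht k hkmem).1.trans (ht k hkmem).2
  have hd0 : 0 ≤ d := hc.trans ((hp k hkmem).1.trans (hp k hkmem).2)
  have hpk : 0 < 1 - p k := by linarith [hp k hkmem]
  have hpkn : 0 < 1 - p (k + n) := by linarith [hp (k + n) hknmem]
  have hdiff := sub_le_mul_one_sub (hp k hkmem).2 (hc.trans (hp (k + n) hknmem).1) hd.le
  rw [mul_add]
  simp only [mul_sum, ← sum_add_distrib]
  unfold q2
  refine sum_le_sum fun l hl => ?_
  obtain ⟨hl1, hl2⟩ := mem_Icc.1 hl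
  have hlmem : l ∈ Icc 1 (k + n) := mem_Icc.2 ⟨by omega, by omega⟩
  obtain ⟨hQ0, hQ⟩ := prod_Icc_one_sub_bounds (m := l - 1) hp hd.le (by omega)
  obtain ⟨hS0, hS⟩ := sum_Icc_bounds (m := l) ht (by omega)
  have hweight : (∏ i ∈ Icc 1 (l - 1), (1 - p i)) * p l ≤ (1 - c) ^ (l - 1) * d :=
    mul_le_mul_of_nonneg hQ (hp l hlmem).2 hQ0 hd0
  have hbracket : (∑ i ∈ Icc 1 l, t i) * (p k - p (k + n)) / (1 - p k) +
        (t (k + n) - t k) * (1 - p (k + n)) / (1 - p k) ≤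
      T * ((1 - p (k + n)) / (1 - p k)) * (d * l + 1) := by
    rw [← add_div, mul_div_assoc', div_mul_eq_mul_div, div_le_div_iff_of_pos_right hpk]
    have := mul_le_mul_of_nonneg hS hdiff hS0 (by positivity)
    nlinarith [(ht (k + n) hknmem).2, (ht k hkmem).1]
  calc _ ≤ ((1 - c) ^ (l - 1) * d) * (T * ((1 - p (k + n)) / (1 - p k)) * (d * l + 1)) :=
        mul_le_mul_of_nonneg hweight hbracket (mul_nonneg hQ0 (hc.trans (hp l hlmem).1))
          (by positivity)
    _ = _ := by ring

lemma q3_le (hp : ∀ i ∈ Icc 1 (k + n), c ≤ p i ∧ p i ≤ d)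
    (ht : ∀ i ∈ Icc 1 (k + n), 0 ≤ t i ∧ t i ≤ T) (hc : 0 ≤ c) (hd : d < 1) (hk : 1 ≤ k) :
    q3 p t k n ≤ T * ((1 - p (k + n)) / (1 - p k)) * d * ((k + n) * (1 - c) ^ (k + n - 1)) := by
  have hkmem : k ∈ Icc 1 (k + n) := mem_Icc.2 ⟨hk, k.le_add_right n⟩
  have hknmem : k + n ∈ Icc 1 (k + n) := mem_Icc.2 ⟨by omega, le_rfl⟩
  have hpk : 0 < 1 - p k := by linarith [hp k hkmem]
  have hpkn : 0 < 1 - p (k + n) := by linarith [hp (k + n) hknmem]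
  have hd0 : 0 ≤ d := hc.trans ((hp k hkmem).1.trans (hp k hkmem).2)
  obtain ⟨hQ0, hQ⟩ := prod_Icc_one_sub_bounds (m := k + n - 1) hp hd.le (by omega)
  obtain ⟨hS0, hS⟩ := sum_Icc_bounds (m := k + n) ht le_rfl
  have hdiff := sub_le_mul_one_sub (hp k hkmem).2 (hc.trans (hp (k + n) hknmem).1) hd.le
  calc q3 p t k n
      ≤ (((k + n : ℕ) * T) * (1 - c) ^ (k + n - 1)) * (d * (1 - p (k + n))) / (1 - p k) := by
        unfold q3
        gcongr ?_ / _
        exact mul_le_mul_of_nonneg (mul_le_mul_of_nonneg hS hQ hS0 (hQ0.trans hQ)) hdiff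
          (mul_nonneg hS0 hQ0) (by positivity)
    _ = _ := by push_cast; ring

lemma weighted_geom_sum_step (hc : 0 < c) (hcd : c ≤ d) (hd : d < 1) {M : ℝ} (hM : 0 ≤ M) :
    d * M + 1 - M + (M + 1) * (1 - c) ≤ (M * c - (1 - c)) * (1 / c - 1 / d) + 1 / c := by
  have hd0 : 0 < d := hc.trans_le hcd
  have h : (M * c - (1 - c)) * (1 / c - 1 / d) + 1 / c - (d * M + 1 - M + (M + 1) * (1 - c)) =
      (1 - d) * (M * (d - c) + (1 - c)) / d := by
    field_simp
    ring
  have : 0 ≤ (1 - d) * (M * (d - c) + (1 - c)) / d :=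
    div_nonneg (mul_nonneg (by linarith)
      (add_nonneg (mul_nonneg hM (sub_nonneg.2 hcd)) (by linarith))) hd0.le
  linarith

lemma weighted_geom_sum_le (hc : 0 < c) (hcd : c ≤ d) (hd : d < 1) (k : ℕ) {n : ℕ}
    (hn : 1 ≤ n) :
    d * ∑ l ∈ Icc (k + 1) (k + n - 1), (l : ℝ) * (1 - c) ^ (l - 1) +
        ∑ l ∈ Icc (k + 1) (k + n - 1), (1 - c) ^ (l - 1) + (k + n) * (1 - c) ^ (k + n - 1) ≤
      (1 / c + 1 / c ^ 2 + k / c) * (1 - c) ^ k -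
        (k + n) * (1 / c - 1 / d) * (1 - c) ^ (k + n - 1) - (1 - c) ^ (k + n - 1) / c ^ 2 := by
  have hd0 : 0 < d := hc.trans_le hcd
  obtain ⟨m, rfl⟩ := Nat.exists_eq_add_of_le' hn
  rw [show k + (m + 1) - 1 = k + m by omega]
  push_cast
  clear hn
  induction m with
  | zero =>
    have hbase : ((k : ℝ) + 1) ≤ ((k : ℝ) + 1) / d := by
      rw [le_div_iff₀ hd0]; nlinarith [(k.cast_nonneg : (0 : ℝ) ≤ k)]
    simp only [add_zero, Nat.cast_zero, zero_add, Icc_eq_empty_of_lt (Nat.lt_succ_self k),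
      sum_empty, mul_zero]
    calc ((k : ℝ) + 1) * (1 - c) ^ k ≤ ((k + 1) / d) * (1 - c) ^ k :=
          mul_le_mul_of_nonneg_right hbase (pow_nonneg (by linarith) k)
      _ = _ := by field_simp; ring
  | succ m ih =>
    rw [← add_assoc, sum_Icc_succ_top (by omega), sum_Icc_succ_top (by omega),
      Nat.add_sub_cancel, pow_succ]
    have hstep := mul_le_mul_of_nonneg_left
      (weighted_geom_sum_step hc hcd hd (by positivity : (0 : ℝ) ≤ k + (m + 1)))
      (pow_nonneg (by linarith : (0 : ℝ) ≤ 1 - c) (k + m))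
    push_cast
    calc _ = (d * ∑ l ∈ Icc (k + 1) (k + m), (l : ℝ) * (1 - c) ^ (l - 1) +
            ∑ l ∈ Icc (k + 1) (k + m), (1 - c) ^ (l - 1) + (k + (m + 1)) * (1 - c) ^ (k + m)) +
          (1 - c) ^ (k + m) *
            (d * (k + (m + 1)) + 1 - (k + (m + 1)) + ((k + (m + 1)) + 1) * (1 - c)) := by
          ring
      _ ≤ _ := add_le_add ih hstep
      _ = _ := by field_simp; ring

end

lemma excess_bound_eq {a b c d T : ℝ} {k n : ℕ} (hk : 1 ≤ k) (hn : 1 ≤ n) (hc0 : c ≠ 0)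
    (hc1 : c ≠ 1) (hd : d ≠ 0) (ha : a ≠ 1) (hb : b ≠ 1) :
    T * ((1 - b) / (1 - a)) * (d / c) * (1 - c) ^ k *
        ((1 + 1 / c + k + ((1 - a) / (1 - b)) * (c * k / (1 - c))) -
          ((1 - c / d) * (k + n) + 1 / c) * (1 - c) ^ (n - 1)) =
      T * d * k * (1 - c) ^ (k - 1) + T * ((1 - b) / (1 - a)) * d *
        ((1 / c + 1 / c ^ 2 + k / c) * (1 - c) ^ k -
          (k + n) * (1 / c - 1 / d) * (1 - c) ^ (k + n - 1) - (1 - c) ^ (k + n - 1) / c ^ 2) := by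
  obtain ⟨k, rfl⟩ := Nat.exists_eq_add_of_le' hk
  obtain ⟨n, rfl⟩ := Nat.exists_eq_add_of_le' hn
  rw [show k + 1 + (n + 1) - 1 = k + 1 + n by omega, Nat.add_sub_cancel, Nat.add_sub_cancel,
    pow_add, pow_succ]
  have : 1 - c ≠ 0 := sub_ne_zero.2 (Ne.symm hc1)
  have : 1 - a ≠ 0 := sub_ne_zero.2 (Ne.symm ha)
  have : 1 - b ≠ 0 := sub_ne_zero.2 (Ne.symm hb)
  field_simp
  ring

theorem excess_upper_bound_general_general
    (N : ℕ) (p t : ℕ → ℝ) (c d T : ℝ)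
    (hc : c ∈ Set.Ioo (0 : ℝ) 1) (hd : d ∈ Set.Ioo (0 : ℝ) 1)
    (hp : ∀ i ∈ Finset.Icc 1 N, c ≤ p i ∧ p i ≤ d)
    (ht : ∀ i ∈ Finset.Icc 1 N, 0 ≤ t i ∧ t i ≤ T)
    (k n : ℕ) (hk : 1 ≤ k) (hn : 1 ≤ n) (hkn : k + n ≤ N) :
    q1 p t k n + q2 p t k n + q3 p t k n ≤
      T * ((1 - p (k + n)) / (1 - p k)) * (d / c) * (1 - c) ^ k *
        ((1 + 1 / c + (k : ℝ) + ((1 - p k) / (1 - p (k + n))) * (c * (k : ℝ) / (1 - c))) -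
          ((1 - c / d) * ((k : ℝ) + (n : ℝ)) + 1 / c) * (1 - c) ^ (n - 1)) := by
  obtain ⟨hc0, hc1⟩ := hc
  obtain ⟨hd0, hd1⟩ := hd
  have hp' : ∀ i ∈ Icc 1 (k + n), c ≤ p i ∧ p i ≤ d := fun i hi =>
    hp i (Icc_subset_Icc_right hkn hi)
  have ht' : ∀ i ∈ Icc 1 (k + n), 0 ≤ t i ∧ t i ≤ T := fun i hi =>
    ht i (Icc_subset_Icc_right hkn hi)
  have hkmem : k ∈ Icc 1 (k + n) := mem_Icc.2 ⟨hk, k.le_add_right n⟩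
  have hpk := hp' k hkmem
  have hpkn := hp' (k + n) (mem_Icc.2 ⟨by omega, le_rfl⟩)
  have hT : 0 ≤ T := (ht' k hkmem).1.trans (ht' k hkmem).2
  have hfactor : 0 ≤ T * ((1 - p (k + n)) / (1 - p k)) * d :=
    mul_nonneg (mul_nonneg hT (div_nonneg (by linarith) (by linarith))) hd0.le
  have hsum := mul_le_mul_of_nonneg_left
    (weighted_geom_sum_le hc0 (hpk.1.trans hpk.2) hd1 k hn) hfactor
  rw [excess_bound_eq hk hn hc0.ne' hc1.ne hd0.ne' (by linarith) (by linarith)]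
  linarith [q1_le hp' ht' hc0.le hd1.le hk, q2_le hp' ht' hc0.le hd1 hk,
    q3_le hp' ht' hc0.le hd1 hk]

/-- If `c ≤ p_i ≤ d` with `c, d ∈ (0,1)` and `0 ≤ t_i ≤ T`, then the excess expected solving
time `EXC = q_1 + q_2 + q_3` caused by interchanging the `k`-th and `(k+n)`-th candidates
satisfies `EXC ≤ T·((1 − p_{k+n})/(1 − p_k))·(d/c)·(1−c)^k·(A − B·(1−c)^{n−1})`, where
`A = 1 + 1/c + k + ((1 − p_k)/(1 − p_{k+n}))·c·k/(1−c)` and `B = (1 − c/d)·(k+n) + 1/c`. -/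
theorem excess_upper_bound_general
    (N : ℕ) (hN : 1 ≤ N) (p t : ℕ → ℝ) (c d T : ℝ)
    (hc : c ∈ Set.Ioo (0 : ℝ) 1) (hd : d ∈ Set.Ioo (0 : ℝ) 1)
    (hp : ∀ i ∈ Finset.Icc 1 N, c ≤ p i ∧ p i ≤ d)
    (ht : ∀ i ∈ Finset.Icc 1 N, 0 ≤ t i ∧ t i ≤ T)
    (k n : ℕ) (hk : 1 ≤ k) (hn : 1 ≤ n) (hkn : k + n ≤ N) :
    q1 p t k n + q2 p t k n + q3 p t k n ≤
      T * ((1 - p (k + n)) / (1 - p k)) * (d / c) * (1 - c) ^ k *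
        ((1 + 1 / c + (k : ℝ) + ((1 - p k) / (1 - p (k + n))) * (c * (k : ℝ) / (1 - c))) -
          ((1 - c / d) * ((k : ℝ) + (n : ℝ)) + 1 / c) * (1 - c) ^ (n - 1)) :=
  excess_upper_bound_general_general N p t c d T hc hd hp ht k n hk hn hkn
end

section
/- Let c, d ∈ (0,1) with c ≤ p_i ≤ d for each i = 1,…,N, and let 0 < t ≤ t_i ≤ T for each i and some t, T. Let 1 ≤ k, 1 ≤ n with k+n ≤ N, and suppose p_k > p_{k+n} and t_k ≤ t_{k+n}. Then EXC = q_1 + q_2 + q_3 satisfies EXC ≥ t · ((p_k − p_{k+n})/(1 − p_k)) · (c/d) · (1−d)^k · (A − B·(1−d)^{n−1}), where A = 1/d + k + ((1 − p_k)/(p_k − p_{k+n})) · d·k · ( 1/(1−d) − (d·T/(c·t)) · e^{−S_{k−1}}/(1−d)^k ) and B = (1 − d/c)·(k+n) + (1−d)/d. -/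
open Finset

lemma Gcf (x : ℝ) (m : ℕ) :
    (1-x)^2 * ∑ l ∈ Finset.Ioc 0 m, (l:ℝ)*x^(l-1)
      = 1 - ((m:ℝ)+1)*x^m + (m:ℝ)*x^(m+1) := by
  induction m with
  | zero => simp
  | succ m ih =>
      rw [Finset.sum_Ioc_succ_top (Nat.zero_le _), mul_add, ih]
      push_cast
      ring

lemma Gdiff (x : ℝ) (a b : ℕ) (hab : a ≤ b) :
    (1-x)^2 * ∑ l ∈ Finset.Ioc a b, (l:ℝ)*x^(l-1)
      = ((a:ℝ)+1)*x^a - (a:ℝ)*x^(a+1) - ((b:ℝ)+1)*x^b + (b:ℝ)*x^(b+1) := by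
  have h := Finset.sum_Ioc_consecutive (fun l => (l:ℝ)*x^(l-1)) (Nat.zero_le a) hab
  have ha := Gcf x a
  have hb := Gcf x b
  linear_combination hb - ha + (1-x)^2 * h


set_option maxHeartbeats 1000000 in
/-- If `c ≤ p_i ≤ d` with `c, d ∈ (0,1)`, `0 < t ≤ t_i ≤ T`, `p_k > p_{k+n}` and
`t_k ≤ t_{k+n}`, then the excess expected solving time `EXC = q_1 + q_2 + q_3` caused by
interchanging the `k`-th and `(k+n)`-th candidates satisfies
`EXC ≥ t·((p_k − p_{k+n})/(1 − p_k))·(c/d)·(1−d)^k·(A − B·(1−d)^{n−1})`, where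
`A = 1/d + k + ((1 − p_k)/(p_k − p_{k+n}))·d·k·(1/(1−d) − (d·T/(c·t))·e^{−S_{k−1}}/(1−d)^k)`
and `B = (1 − d/c)·(k+n) + (1−d)/d`. -/
theorem excess_lower_bound_general
    (N : ℕ) (hN : 1 ≤ N) (p tm : ℕ → ℝ) (c d t T : ℝ)
    (hc : c ∈ Set.Ioo (0 : ℝ) 1) (hd : d ∈ Set.Ioo (0 : ℝ) 1)
    (hp : ∀ i ∈ Finset.Icc 1 N, c ≤ p i ∧ p i ≤ d)
    (htpos : 0 < t)
    (ht : ∀ i ∈ Finset.Icc 1 N, t ≤ tm i ∧ tm i ≤ T)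
    (k n : ℕ) (hk : 1 ≤ k) (hn : 1 ≤ n) (hkn : k + n ≤ N)
    (hpk : p (k + n) < p k) (htk : tm k ≤ tm (k + n)) :
    q1 p tm k n + q2 p tm k n + q3 p tm k n ≥
      t * ((p k - p (k + n)) / (1 - p k)) * (c / d) * (1 - d) ^ k *
        ((1 / d + (k : ℝ) +
            ((1 - p k) / (p k - p (k + n))) * d * (k : ℝ) *
              (1 / (1 - d) -
                d * T / (c * t) *
                  (Real.exp (-(∑ i ∈ Finset.Icc 1 (k - 1), p i)) / (1 - d) ^ k))) -
          ((1 - d / c) * ((k : ℝ) + (n : ℝ)) + (1 - d) / d) * (1 - d) ^ (n - 1)) := by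
  obtain ⟨hc0, hc1⟩ := hc
  obtain ⟨hd0, hd1⟩ := hd
  obtain ⟨k', rfl⟩ : ∃ k', k = k' + 1 := ⟨k - 1, by omega⟩
  obtain ⟨n', rfl⟩ : ∃ n', n = n' + 1 := ⟨n - 1, by omega⟩
  have hx0 : (0:ℝ) < 1 - d := by linarith
  have hidx : k' + 1 + (n' + 1) = k' + n' + 2 := by omega
  rw [hidx] at hpk htk hkn ⊢
  simp only [Nat.add_sub_cancel] at *
  have hpK1 := hp (k' + 1) (Finset.mem_Icc.mpr ⟨by omega, by omega⟩)
  have hpK2 := hp (k' + n' + 2) (Finset.mem_Icc.mpr ⟨by omega, by omega⟩)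
  have htK1 := ht (k' + 1) (Finset.mem_Icc.mpr ⟨by omega, by omega⟩)
  have htK2 := ht (k' + n' + 2) (Finset.mem_Icc.mpr ⟨by omega, by omega⟩)
  have h1pk : 0 < 1 - p (k' + 1) := by linarith [hpK1.2]
  have hΔ : 0 < p (k' + 1) - p (k' + n' + 2) := by linarith
  -- product and sum bounds
  have hmem : ∀ m, m ≤ N → ∀ i ∈ Finset.Icc 1 m, i ∈ Finset.Icc 1 N := by
    intro m hm i hi
    rw [Finset.mem_Icc] at hi ⊢
    omega
  have hQlb : ∀ m, m ≤ N → (1-d)^m ≤ ∏ i ∈ Finset.Icc 1 m, (1 - p i) := by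
    intro m hm
    calc (1-d)^m = ∏ _i ∈ Finset.Icc 1 m, (1-d) := by
          rw [Finset.prod_const, Nat.card_Icc, Nat.add_sub_cancel]
      _ ≤ _ := Finset.prod_le_prod (fun i _ => by linarith)
          (fun i hi => by linarith [(hp i (hmem m hm i hi)).2])
  have hQub : ∀ m, m ≤ N →
      (∏ i ∈ Finset.Icc 1 m, (1 - p i)) ≤ Real.exp (-(∑ i ∈ Finset.Icc 1 m, p i)) := by
    intro m hm
    calc (∏ i ∈ Finset.Icc 1 m, (1 - p i)) ≤ ∏ i ∈ Finset.Icc 1 m, Real.exp (-(p i)) :=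
          Finset.prod_le_prod
            (fun i hi => by linarith [(hp i (hmem m hm i hi)).2])
            (fun i hi => by linarith [Real.add_one_le_exp (-(p i))])
      _ = Real.exp (∑ i ∈ Finset.Icc 1 m, -(p i)) := (Real.exp_sum _ _).symm
      _ = Real.exp (-(∑ i ∈ Finset.Icc 1 m, p i)) := by rw [Finset.sum_neg_distrib]
  have hTlb : ∀ m, m ≤ N → (m:ℝ) * t ≤ ∑ i ∈ Finset.Icc 1 m, tm i := by
    intro m hm
    have h := Finset.card_nsmul_le_sum (Finset.Icc 1 m) tm t
      (fun i hi => (ht i (hmem m hm i hi)).1)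
    rw [Nat.card_Icc, Nat.add_sub_cancel, nsmul_eq_mul] at h
    exact h
  have hTub : ∀ m, m ≤ N → (∑ i ∈ Finset.Icc 1 m, tm i) ≤ (m:ℝ) * T := by
    intro m hm
    have h := Finset.sum_le_card_nsmul (Finset.Icc 1 m) tm T
      (fun i hi => (ht i (hmem m hm i hi)).2)
    rw [Nat.card_Icc, Nat.add_sub_cancel, nsmul_eq_mul] at h
    exact h
  have htT : t ≤ T := le_trans htK1.1 htK1.2
  have hT0 : (0:ℝ) ≤ T := le_trans htpos.le htT
  -- q1 bound
  have h1 : q1 p tm (k' + 1) (n' + 1) ≥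
      t*c*((k':ℝ)+1)*(1-d)^k' -
        d*T*((k':ℝ)+1)*Real.exp (-(∑ i ∈ Finset.Icc 1 k', p i)) := by
    have hQ1 := hQlb k' (by omega)
    have hQ2 := hQub k' (by omega)
    have hT1 := hTub k' (by omega)
    have hQ0 : (0:ℝ) ≤ ∏ i ∈ Finset.Icc 1 k', (1 - p i) := le_trans (by positivity) hQ1
    have hx0' : (0:ℝ) ≤ (1-d)^k' := by positivity
    have hbr : (∑ i ∈ Finset.Icc 1 k', tm i) * (p (k' + n' + 2) - p (k' + 1)) +
        (tm (k' + n' + 2) * p (k' + n' + 2) - tm (k' + 1) * p (k' + 1)) ≥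
        -(((k':ℝ)+1)*T*(p (k' + 1) - p (k' + n' + 2))) := by
      have f1 : 0 ≤ (tm (k' + n' + 2) - tm (k' + 1)) * p (k' + n' + 2) :=
        mul_nonneg (by linarith) (by linarith [hpK2.1])
      have f2 : ((∑ i ∈ Finset.Icc 1 k', tm i) + tm (k' + 1)) *
            (p (k' + 1) - p (k' + n' + 2)) ≤
          (((k':ℝ)+1)*T) * (p (k' + 1) - p (k' + n' + 2)) :=
        mul_le_mul_of_nonneg_right (by linarith [htK1.2]) hΔ.le
      nlinarith [f1, f2]
    simp only [q1, hidx, Nat.add_sub_cancel]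
    calc (∑ i ∈ Finset.Icc 1 k', tm i) * (∏ i ∈ Finset.Icc 1 k', (1 - p i)) *
          (p (k' + n' + 2) - p (k' + 1)) +
          (∏ i ∈ Finset.Icc 1 k', (1 - p i)) *
            (tm (k' + n' + 2) * p (k' + n' + 2) - tm (k' + 1) * p (k' + 1))
        = (∏ i ∈ Finset.Icc 1 k', (1 - p i)) *
            ((∑ i ∈ Finset.Icc 1 k', tm i) * (p (k' + n' + 2) - p (k' + 1)) +
              (tm (k' + n' + 2) * p (k' + n' + 2) - tm (k' + 1) * p (k' + 1))) := by ring
      _ ≥ (∏ i ∈ Finset.Icc 1 k', (1 - p i)) *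
            (-(((k':ℝ)+1)*T*(p (k' + 1) - p (k' + n' + 2)))) :=
          mul_le_mul_of_nonneg_left hbr hQ0
      _ ≥ t*c*((k':ℝ)+1)*(1-d)^k' -
            d*T*((k':ℝ)+1)*Real.exp (-(∑ i ∈ Finset.Icc 1 k', p i)) := by
          have f1 : (((k':ℝ)+1)*T) * (c*(1-d)^k') ≤
              (((k':ℝ)+1)*T) * ((d - (p (k' + 1) - p (k' + n' + 2))) *
                (∏ i ∈ Finset.Icc 1 k', (1 - p i))) := by
            apply mul_le_mul_of_nonneg_left _ (mul_nonneg (by positivity) hT0)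
            exact mul_le_mul (by linarith [hpK1.2, hpK2.1]) hQ1 hx0' (by linarith [hpK2.1, hpK1.2])
          have f2 : (0:ℝ) ≤ (((k':ℝ)+1)*T) *
              (d * Real.exp (-(∑ i ∈ Finset.Icc 1 k', p i)) -
                d * (∏ i ∈ Finset.Icc 1 k', (1 - p i))) := by
            apply mul_nonneg (mul_nonneg (by positivity) hT0)
            nlinarith [hQ2, hd0]
          have f3 : t * (c*((k':ℝ)+1)*(1-d)^k') ≤ T * (c*((k':ℝ)+1)*(1-d)^k') :=
            mul_le_mul_of_nonneg_right htT (by positivity)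
          nlinarith [f1, f2, f3]
  -- q2 bound
  have h2 : q2 p tm (k' + 1) (n' + 1) ≥
      t * (p (k' + 1) - p (k' + n' + 2)) / (1 - p (k' + 1)) * c *
        ∑ l ∈ Finset.Ioc (k' + 1) (k' + n' + 1), (l:ℝ)*(1-d)^(l-1) := by
    rw [ge_iff_le, Finset.mul_sum, q2, hidx,
      show k' + n' + 2 - 1 = k' + n' + 1 from rfl,
      show Finset.Icc (k' + 1 + 1) (k' + n' + 1) = Finset.Ioc (k' + 1) (k' + n' + 1) from
        Finset.Icc_add_one_left_eq_Ioc _ _]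
    apply Finset.sum_le_sum
    intro l hl
    obtain ⟨hl1, hl2⟩ := Finset.mem_Ioc.mp hl
    have hpl := hp l (Finset.mem_Icc.mpr ⟨by omega, by omega⟩)
    have hQl := hQlb (l - 1) (by omega)
    have hTl := hTlb l (by omega)
    have hQl0 : (0:ℝ) ≤ ∏ i ∈ Finset.Icc 1 (l - 1), (1 - p i) := le_trans (by positivity) hQl
    have hfac : c*(1-d)^(l-1) ≤ (∏ i ∈ Finset.Icc 1 (l - 1), (1 - p i)) * p l := by
      calc c*(1-d)^(l-1) = (1-d)^(l-1)*c := by ring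
        _ ≤ (∏ i ∈ Finset.Icc 1 (l - 1), (1 - p i)) * p l :=
            mul_le_mul hQl hpl.1 hc0.le hQl0
    have hinner : (l:ℝ)*t*(p (k' + 1) - p (k' + n' + 2))/(1 - p (k' + 1)) ≤
        (∑ i ∈ Finset.Icc 1 l, tm i) * (p (k' + 1) - p (k' + n' + 2)) / (1 - p (k' + 1)) +
          (tm (k' + n' + 2) - tm (k' + 1)) * (1 - p (k' + n' + 2)) / (1 - p (k' + 1)) := by
      have t2 : (0:ℝ) ≤ (tm (k' + n' + 2) - tm (k' + 1)) * (1 - p (k' + n' + 2)) /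
          (1 - p (k' + 1)) :=
        div_nonneg (mul_nonneg (by linarith) (by linarith [hpK2.2])) h1pk.le
      have t1 : (l:ℝ)*t*(p (k' + 1) - p (k' + n' + 2))/(1 - p (k' + 1)) ≤
          (∑ i ∈ Finset.Icc 1 l, tm i) * (p (k' + 1) - p (k' + n' + 2)) /
            (1 - p (k' + 1)) := by
        exact div_le_div_of_nonneg_right
          (mul_le_mul_of_nonneg_right hTl hΔ.le) h1pk.le
      linarith
    calc t * (p (k' + 1) - p (k' + n' + 2)) / (1 - p (k' + 1)) * c * ((l:ℝ)*(1-d)^(l-1))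
        = (c*(1-d)^(l-1)) * ((l:ℝ)*t*(p (k' + 1) - p (k' + n' + 2))/(1 - p (k' + 1))) := by
          ring
      _ ≤ ((∏ i ∈ Finset.Icc 1 (l - 1), (1 - p i)) * p l) *
            ((∑ i ∈ Finset.Icc 1 l, tm i) * (p (k' + 1) - p (k' + n' + 2)) /
              (1 - p (k' + 1)) +
              (tm (k' + n' + 2) - tm (k' + 1)) * (1 - p (k' + n' + 2)) /
                (1 - p (k' + 1)))  :=
          mul_le_mul hfac hinner (by positivity) (le_trans (by positivity) hfac)
  -- q3 bound
  have h3 : q3 p tm (k' + 1) (n' + 1) ≥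
      t * (p (k' + 1) - p (k' + n' + 2)) / (1 - p (k' + 1)) *
        ((k':ℝ)+(n':ℝ)+2) * (1-d)^(k'+n'+1) := by
    have hT := hTlb (k' + n' + 2) (by omega)
    have hQ := hQlb (k' + n' + 1) (by omega)
    have hS0 : (0:ℝ) ≤ ∑ i ∈ Finset.Icc 1 (k' + n' + 2), tm i :=
      le_trans (by positivity) hT
    push_cast at hT
    have key : (((k':ℝ)+(n':ℝ)+2)*t) * ((1-d)^(k'+n'+1)) ≤
        (∑ i ∈ Finset.Icc 1 (k' + n' + 2), tm i) *
          (∏ i ∈ Finset.Icc 1 (k' + n' + 1), (1 - p i)) :=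
      mul_le_mul (by linarith) hQ (by positivity) hS0
    rw [ge_iff_le, q3, hidx, show k' + n' + 2 - 1 = k' + n' + 1 from rfl]
    calc t * (p (k' + 1) - p (k' + n' + 2)) / (1 - p (k' + 1)) *
          ((k':ℝ)+(n':ℝ)+2) * (1-d)^(k'+n'+1)
        = ((((k':ℝ)+(n':ℝ)+2)*t) * ((1-d)^(k'+n'+1)) *
            (p (k' + 1) - p (k' + n' + 2))) / (1 - p (k' + 1)) := by ring
      _ ≤ (∑ i ∈ Finset.Icc 1 (k' + n' + 2), tm i) *
            (∏ i ∈ Finset.Icc 1 (k' + n' + 1), (1 - p i)) *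
            (p (k' + 1) - p (k' + n' + 2)) / (1 - p (k' + 1)) :=
          div_le_div_of_nonneg_right
            (mul_le_mul_of_nonneg_right key hΔ.le) h1pk.le
  -- closed form of the geometric-derivative sum
  have hG := Gdiff (1-d) (k' + 1) (k' + n' + 1) (by omega)
  rw [show (1:ℝ) - (1-d) = d from by ring] at hG
  push_cast at hG
  have hSig : ∑ l ∈ Finset.Ioc (k' + 1) (k' + n' + 1), (l:ℝ)*(1-d)^(l-1)
      = (((k':ℝ)+1+1)*(1-d)^(k'+1) - ((k':ℝ)+1)*(1-d)^(k'+1+1) -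
          ((k':ℝ)+(n':ℝ)+1+1)*(1-d)^(k'+n'+1) +
          ((k':ℝ)+(n':ℝ)+1)*(1-d)^(k'+n'+1+1)) / d^2 := by
    rw [eq_div_iff (by positivity)]
    linear_combination hG
  rw [ge_iff_le]
  have hsum : t * (p (k' + 1) - p (k' + n' + 2)) / (1 - p (k' + 1)) * c *
        (∑ l ∈ Finset.Ioc (k' + 1) (k' + n' + 1), (l:ℝ)*(1-d)^(l-1)) +
      t * (p (k' + 1) - p (k' + n' + 2)) / (1 - p (k' + 1)) *
        ((k':ℝ)+(n':ℝ)+2) * (1-d)^(k'+n'+1) +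
      (t*c*((k':ℝ)+1)*(1-d)^k' -
        d*T*((k':ℝ)+1)*Real.exp (-(∑ i ∈ Finset.Icc 1 k', p i))) ≤
      q1 p tm (k' + 1) (n' + 1) + q2 p tm (k' + 1) (n' + 1) +
        q3 p tm (k' + 1) (n' + 1) := by
    linarith [h1, h2, h3]
  refine le_trans (le_of_eq ?_) hsum
  rw [hSig]
  push_cast
  have hx' : (1:ℝ) - d ≠ 0 := ne_of_gt hx0
  have hpk' : (1:ℝ) - p (k' + 1) ≠ 0 := ne_of_gt h1pk
  have hΔ' : p (k' + 1) - p (k' + n' + 2) ≠ 0 := ne_of_gt hΔ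
  field_simp
  ring
end

section
/- Let c, d ∈ (0,1) with c ≤ p_i ≤ d for each i = 1,…,N, and let t_i = T for each i and some T > 0. Let 1 ≤ k, 1 ≤ n with k+n ≤ N, and suppose p_k ≥ p_{k+n}. Then EXC = q_1 + q_2 + q_3 satisfies EXC ≤ T · d · ((p_k − p_{k+n})/(1 − p_k)) · ((1−c)^k/c^2) · (A − B·(1−c)^{n−1}), where A = 1 + k·c·( 1 − ((1 − p_k)/(1−c)) · (c/d) · ((1−d)/(1−c))^{k−1} ) and B = 1 − c + c·(n+k)·(1 − c/d). -/
open Finset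

noncomputable def excessWeight (p : ℕ → ℝ) (k n : ℕ) : ℝ :=
  -((k : ℝ) * (∏ i ∈ Icc 1 (k - 1), (1 - p i)) * (1 - p k)) +
    ∑ l ∈ Icc (k + 1) (k + n - 1), (l : ℝ) * (∏ i ∈ Icc 1 (l - 1), (1 - p i)) * p l +
    ((k : ℝ) + n) * ∏ i ∈ Icc 1 (k + n - 1), (1 - p i)

section Products

variable {ι : Type*} {s : Finset ι} {p : ι → ℝ} {c d : ℝ}

lemma prod_one_sub_le_pow_card (h : ∀ i ∈ s, c ≤ p i ∧ p i ≤ 1) :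
    ∏ i ∈ s, (1 - p i) ≤ (1 - c) ^ #s := by
  rw [← prod_const]
  exact prod_le_prod (fun i hi => by linarith [h i hi]) fun i hi => by linarith [h i hi]

lemma pow_card_le_prod_one_sub (hd : d ≤ 1) (h : ∀ i ∈ s, p i ≤ d) :
    (1 - d) ^ #s ≤ ∏ i ∈ s, (1 - p i) := by
  rw [← prod_const]
  exact prod_le_prod (fun _ _ => by linarith) fun i hi => by linarith [h i hi]

end Products

lemma sq_mul_sum_Icc_mul_pow_sub_one {R : Type*} [CommRing R] (c : R) {k m : ℕ} (hkm : k ≤ m) :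
    c ^ 2 * ∑ l ∈ Icc (k + 1) m, (l : R) * (1 - c) ^ (l - 1) =
      (1 - c) ^ k * (1 + k * c) - (1 - c) ^ m * (1 + m * c) := by
  induction m, hkm using Nat.le_induction with
  | base => simp
  | succ m hkm ih =>
    rw [sum_Icc_succ_top (by omega), mul_add, ih, Nat.add_sub_cancel, pow_succ]
    push_cast
    ring

lemma sum_Icc_one_const {t : ℕ → ℝ} {T : ℝ} {m N : ℕ} (hmN : m ≤ N)
    (ht : ∀ i ∈ Icc 1 N, t i = T) : ∑ i ∈ Icc 1 m, t i = m * T := by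
  rw [sum_congr rfl fun i hi => ht i (Icc_subset_Icc_right hmN hi)]
  simp

section EqualTimes

variable {p t : ℕ → ℝ} {T : ℝ} {k n : ℕ}

lemma q1_of_equal_times (ht : ∀ i ∈ Icc 1 (k + n), t i = T) (hk : 1 ≤ k) :
    q1 p t k n = k * T * (∏ i ∈ Icc 1 (k - 1), (1 - p i)) * (p (k + n) - p k) := by
  rw [q1, sum_Icc_one_const (by omega) ht, ht k (mem_Icc.mpr ⟨hk, by omega⟩),
    ht (k + n) (mem_Icc.mpr ⟨by omega, le_rfl⟩), Nat.cast_sub hk]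
  ring

lemma q2_of_equal_times (ht : ∀ i ∈ Icc 1 (k + n), t i = T) (hk : 1 ≤ k) :
    q2 p t k n = T * ((p k - p (k + n)) / (1 - p k)) *
      ∑ l ∈ Icc (k + 1) (k + n - 1), (l : ℝ) * (∏ i ∈ Icc 1 (l - 1), (1 - p i)) * p l := by
  rw [q2, mul_sum]
  refine sum_congr rfl fun l hl => ?_
  rw [sum_Icc_one_const (by simp at hl; omega) ht, ht k (mem_Icc.mpr ⟨hk, by omega⟩),
    ht (k + n) (mem_Icc.mpr ⟨by omega, le_rfl⟩)]
  ring

lemma q3_of_equal_times (ht : ∀ i ∈ Icc 1 (k + n), t i = T) :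
    q3 p t k n = (k + n) * T * (∏ i ∈ Icc 1 (k + n - 1), (1 - p i)) * (p k - p (k + n)) /
      (1 - p k) := by
  rw [q3, sum_Icc_one_const le_rfl ht]
  push_cast
  ring

lemma excess_of_equal_times (ht : ∀ i ∈ Icc 1 (k + n), t i = T) (hk : 1 ≤ k) (hpk : p k ≠ 1) :
    q1 p t k n + q2 p t k n + q3 p t k n =
      T * ((p k - p (k + n)) / (1 - p k)) * excessWeight p k n := by
  have : 1 - p k ≠ 0 := sub_ne_zero.mpr hpk.symm
  rw [q1_of_equal_times ht hk, q2_of_equal_times ht hk, q3_of_equal_times ht, excessWeight]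
  field_simp
  ring

end EqualTimes

lemma excessWeight_le {p : ℕ → ℝ} {c d : ℝ} {k n : ℕ}
    (hp : ∀ i ∈ Icc 1 (k + n), c ≤ p i ∧ p i ≤ d) (hc : 0 ≤ c) (hd : d ≤ 1) (hk : 1 ≤ k) :
    excessWeight p k n ≤
      -(k * (1 - d) ^ (k - 1) * (1 - p k)) +
        d * ∑ l ∈ Icc (k + 1) (k + n - 1), (l : ℝ) * (1 - c) ^ (l - 1) +
        (k + n) * (1 - c) ^ (k + n - 1) := by
  have hp1 {m : ℕ} (hm : m ≤ k + n) : ∀ i ∈ Icc 1 m, c ≤ p i ∧ p i ≤ 1 := fun i hi =>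
    have h := hp i (Icc_subset_Icc_right hm hi)
    ⟨h.1, h.2.trans hd⟩
  have hQ_le {m : ℕ} (hm : m ≤ k + n) : ∏ i ∈ Icc 1 m, (1 - p i) ≤ (1 - c) ^ m := by
    simpa using prod_one_sub_le_pow_card (hp1 hm)
  have hQ_ge : (1 - d) ^ (k - 1) ≤ ∏ i ∈ Icc 1 (k - 1), (1 - p i) := by
    simpa using pow_card_le_prod_one_sub hd fun i hi =>
      (hp i (Icc_subset_Icc_right (by omega) hi)).2
  have hpk : p k ≤ 1 := (hp1 le_rfl k (mem_Icc.mpr ⟨hk, by omega⟩)).2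
  have hsum : ∑ l ∈ Icc (k + 1) (k + n - 1), (l : ℝ) * (∏ i ∈ Icc 1 (l - 1), (1 - p i)) * p l ≤
      d * ∑ l ∈ Icc (k + 1) (k + n - 1), (l : ℝ) * (1 - c) ^ (l - 1) := by
    rw [mul_sum]
    refine sum_le_sum fun l hl => ?_
    have hl' := mem_Icc.mp hl
    have hpl := hp l (mem_Icc.mpr ⟨by omega, by omega⟩)
    have hc1 : 0 ≤ 1 - c := by linarith [hpl.2]
    calc (l : ℝ) * (∏ i ∈ Icc 1 (l - 1), (1 - p i)) * p l ≤ l * (1 - c) ^ (l - 1) * d := by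
          gcongr
          · exact hc.trans hpl.1
          · exact hQ_le (by omega)
          · exact hpl.2
      _ = d * (l * (1 - c) ^ (l - 1)) := by ring
  have hfirst : k * (1 - d) ^ (k - 1) * (1 - p k) ≤
      k * (∏ i ∈ Icc 1 (k - 1), (1 - p i)) * (1 - p k) := by
    gcongr
  have hlast : ((k : ℝ) + n) * ∏ i ∈ Icc 1 (k + n - 1), (1 - p i) ≤
      (k + n) * (1 - c) ^ (k + n - 1) := by
    gcongr
    exact hQ_le (by omega)
  rw [excessWeight]
  linarith

lemma excessWeight_bound_eq {c d x : ℝ} {k n : ℕ} (hc : c ≠ 0) (hc1 : c ≠ 1) (hd : d ≠ 0)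
    (hk : 1 ≤ k) (hn : 1 ≤ n) :
    -(k * (1 - d) ^ (k - 1) * (1 - x)) +
        d * ∑ l ∈ Icc (k + 1) (k + n - 1), (l : ℝ) * (1 - c) ^ (l - 1) +
        (k + n) * (1 - c) ^ (k + n - 1) =
      d * ((1 - c) ^ k / c ^ 2) *
        ((1 + (k : ℝ) * c *
            (1 - ((1 - x) / (1 - c)) * (c / d) * ((1 - d) / (1 - c)) ^ (k - 1))) -
          (1 - c + c * ((n : ℝ) + (k : ℝ)) * (1 - c / d)) * (1 - c) ^ (n - 1)) := by
  have hc1' : 1 - c ≠ 0 := sub_ne_zero.mpr (Ne.symm hc1)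
  have hsum : ∑ l ∈ Icc (k + 1) (k + n - 1), (l : ℝ) * (1 - c) ^ (l - 1) =
      ((1 - c) ^ k * (1 + k * c) - (1 - c) ^ (k + n - 1) * (1 + ↑(k + n - 1) * c)) / c ^ 2 := by
    rw [eq_div_iff (pow_ne_zero 2 hc), mul_comm]
    exact sq_mul_sum_Icc_mul_pow_sub_one c (by omega)
  rw [hsum]
  obtain ⟨j, rfl⟩ : ∃ j, k = j + 1 := ⟨k - 1, by omega⟩
  obtain ⟨m, rfl⟩ : ∃ m, n = m + 1 := ⟨n - 1, by omega⟩
  simp only [show j + 1 + (m + 1) - 1 = j + 1 + m by omega, Nat.add_sub_cancel, div_pow]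
  push_cast
  field_simp
  ring

theorem excess_upper_bound_equal_times_general
    (N : ℕ) (p t : ℕ → ℝ) (c d T : ℝ)
    (hc : c ∈ Set.Ioo (0 : ℝ) 1) (hd : d ∈ Set.Ioo (0 : ℝ) 1)
    (hp : ∀ i ∈ Finset.Icc 1 N, c ≤ p i ∧ p i ≤ d)
    (hT : 0 < T) (ht : ∀ i ∈ Finset.Icc 1 N, t i = T)
    (k n : ℕ) (hk : 1 ≤ k) (hn : 1 ≤ n) (hkn : k + n ≤ N)
    (hpk : p (k + n) ≤ p k) :
    q1 p t k n + q2 p t k n + q3 p t k n ≤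
      T * d * ((p k - p (k + n)) / (1 - p k)) * ((1 - c) ^ k / c ^ 2) *
        ((1 + (k : ℝ) * c *
            (1 - ((1 - p k) / (1 - c)) * (c / d) * ((1 - d) / (1 - c)) ^ (k - 1))) -
          (1 - c + c * ((n : ℝ) + (k : ℝ)) * (1 - c / d)) * (1 - c) ^ (n - 1)) := by
  obtain ⟨hc0, hc1⟩ := hc
  obtain ⟨hd0, hd1⟩ := hd
  have hp' : ∀ i ∈ Icc 1 (k + n), c ≤ p i ∧ p i ≤ d := fun i hi =>
    hp i (Icc_subset_Icc_right hkn hi)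
  have hpk1 : p k < 1 := (hp' k (mem_Icc.mpr ⟨hk, by omega⟩)).2.trans_lt hd1
  calc q1 p t k n + q2 p t k n + q3 p t k n
      = T * ((p k - p (k + n)) / (1 - p k)) * excessWeight p k n :=
        excess_of_equal_times (fun i hi => ht i (Icc_subset_Icc_right hkn hi)) hk hpk1.ne
    _ ≤ T * ((p k - p (k + n)) / (1 - p k)) * (-(k * (1 - d) ^ (k - 1) * (1 - p k)) +
          d * ∑ l ∈ Icc (k + 1) (k + n - 1), (l : ℝ) * (1 - c) ^ (l - 1) +
          (k + n) * (1 - c) ^ (k + n - 1)) := by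
        gcongr
        exact excessWeight_le hp' hc0.le hd1.le hk
    _ = _ := by
        rw [excessWeight_bound_eq hc0.ne' hc1.ne hd0.ne' hk hn]
        ring

/-- If `c ≤ p_i ≤ d` with `c, d ∈ (0,1)`, all execution times are equal to `T > 0`, and
`p_k ≥ p_{k+n}`, then the excess expected solving time `EXC = q_1 + q_2 + q_3` caused by
interchanging the `k`-th and `(k+n)`-th candidates satisfies
`EXC ≤ T·d·((p_k − p_{k+n})/(1 − p_k))·((1−c)^k/c²)·(A − B·(1−c)^{n−1})`, where
`A = 1 + k·c·(1 − ((1 − p_k)/(1−c))·(c/d)·((1−d)/(1−c))^{k−1})` and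
`B = 1 − c + c·(n+k)·(1 − c/d)`. -/
theorem excess_upper_bound_equal_times
    (N : ℕ) (hN : 1 ≤ N) (p t : ℕ → ℝ) (c d T : ℝ)
    (hc : c ∈ Set.Ioo (0 : ℝ) 1) (hd : d ∈ Set.Ioo (0 : ℝ) 1)
    (hp : ∀ i ∈ Finset.Icc 1 N, c ≤ p i ∧ p i ≤ d)
    (hT : 0 < T) (ht : ∀ i ∈ Finset.Icc 1 N, t i = T)
    (k n : ℕ) (hk : 1 ≤ k) (hn : 1 ≤ n) (hkn : k + n ≤ N)
    (hpk : p (k + n) ≤ p k) :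
    q1 p t k n + q2 p t k n + q3 p t k n ≤
      T * d * ((p k - p (k + n)) / (1 - p k)) * ((1 - c) ^ k / c ^ 2) *
        ((1 + (k : ℝ) * c *
            (1 - ((1 - p k) / (1 - c)) * (c / d) * ((1 - d) / (1 - c)) ^ (k - 1))) -
          (1 - c + c * ((n : ℝ) + (k : ℝ)) * (1 - c / d)) * (1 - c) ^ (n - 1)) :=
  excess_upper_bound_equal_times_general N p t c d T hc hd hp hT ht k n hk hn hkn hpk
end

section
/- Let c, d ∈ (0,1) with c ≤ p_i ≤ d for each i = 1,…,N, and let t_i = T for each i and some T > 0. Let 1 ≤ k, 1 ≤ n with k+n ≤ N, and suppose p_k ≥ p_{k+n}. Then EXC = q_1 + q_2 + q_3 satisfies EXC ≥ T · c · ((p_k − p_{k+n})/(1 − p_k)) · ((1−d)^k/d^2) · (A − B·(1−d)^{n−1}), where A = 1 + k·d·( 1 − ((1 − p_k)/(1−d)) · (d/c) · e^{−S_{k−1}}/(1−d)^{k−1} ) and B = 1 − d + d·(n+k)·(1 − d/c). -/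
open Finset

lemma geo_sum (x : ℝ) (k : ℕ) :
    ∀ n : ℕ, 1 ≤ n →
    (∑ l ∈ Finset.Icc (k + 1) (k + n - 1), (l : ℝ) * x ^ (l - 1)) * (1 - x) ^ 2 =
      x ^ k * (1 + (k : ℝ) * (1 - x)) -
      x ^ (k + n - 1) * (((k : ℝ) + (n : ℝ)) - ((k : ℝ) + (n : ℝ) - 1) * x) := by
  intro n hn
  induction n, hn using Nat.le_induction with
  | base =>
      rw [show k + 1 - 1 = k from rfl, Finset.Icc_eq_empty (by omega)]
      push_cast
      ring
  | succ n hn ih =>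
      have h1 : k + (n + 1) - 1 = (k + n - 1) + 1 := by omega
      rw [h1, Finset.sum_Icc_succ_top (by omega)]
      have h2 : (k + n - 1) + 1 = k + n := by omega
      have h4 : x ^ (k + n) = x ^ (k + n - 1) * x := by
        rw [← pow_succ, h2]
      rw [h2, add_mul, ih, h4]
      push_cast
      ring


/-- If `c ≤ p_i ≤ d` with `c, d ∈ (0,1)`, all execution times are equal to `T > 0`, and
`p_k ≥ p_{k+n}`, then the excess expected solving time `EXC = q_1 + q_2 + q_3` caused by
interchanging the `k`-th and `(k+n)`-th candidates satisfies
`EXC ≥ T·c·((p_k − p_{k+n})/(1 − p_k))·((1−d)^k/d²)·(A − B·(1−d)^{n−1})`, where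
`A = 1 + k·d·(1 − ((1 − p_k)/(1−d))·(d/c)·e^{−S_{k−1}}/(1−d)^{k−1})` and
`B = 1 − d + d·(n+k)·(1 − d/c)`. -/
theorem excess_lower_bound_equal_times
    (N : ℕ) (hN : 1 ≤ N) (p t : ℕ → ℝ) (c d T : ℝ)
    (hc : c ∈ Set.Ioo (0 : ℝ) 1) (hd : d ∈ Set.Ioo (0 : ℝ) 1)
    (hp : ∀ i ∈ Finset.Icc 1 N, c ≤ p i ∧ p i ≤ d)
    (hT : 0 < T) (ht : ∀ i ∈ Finset.Icc 1 N, t i = T)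
    (k n : ℕ) (hk : 1 ≤ k) (hn : 1 ≤ n) (hkn : k + n ≤ N)
    (hpk : p (k + n) ≤ p k) :
    q1 p t k n + q2 p t k n + q3 p t k n ≥
      T * c * ((p k - p (k + n)) / (1 - p k)) * ((1 - d) ^ k / d ^ 2) *
        ((1 + (k : ℝ) * d *
            (1 - ((1 - p k) / (1 - d)) * (d / c) *
              (Real.exp (-(∑ i ∈ Finset.Icc 1 (k - 1), p i)) / (1 - d) ^ (k - 1)))) -
          (1 - d + d * ((n : ℝ) + (k : ℝ)) * (1 - d / c)) * (1 - d) ^ (n - 1)) := by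
  obtain ⟨hc0, hc1⟩ := hc
  obtain ⟨hd0, hd1⟩ := hd
  have hx0 : (0:ℝ) < 1 - d := by linarith
  have hkmem : k ∈ Finset.Icc 1 N := Finset.mem_Icc.mpr ⟨hk, by omega⟩
  have hknmem : k + n ∈ Finset.Icc 1 N := Finset.mem_Icc.mpr ⟨by omega, hkn⟩
  have hpkd : p k ≤ d := (hp k hkmem).2
  have hu : (0:ℝ) < 1 - p k := by linarith
  have hΔ : (0:ℝ) ≤ p k - p (k + n) := by linarith
  -- sums of t
  have hts : ∀ m, m ≤ N → (∑ i ∈ Finset.Icc 1 m, t i) = (m : ℝ) * T := by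
    intro m hm
    rw [Finset.sum_congr rfl (fun i hi => ht i (Finset.mem_Icc.mpr
      ⟨(Finset.mem_Icc.mp hi).1, le_trans (Finset.mem_Icc.mp hi).2 hm⟩)),
      Finset.sum_const, Nat.card_Icc, Nat.add_sub_cancel, nsmul_eq_mul]
  -- product lower bounds
  have hprodge : ∀ m, m ≤ N → (1 - d) ^ m ≤ ∏ i ∈ Finset.Icc 1 m, (1 - p i) := by
    intro m hm
    calc (1 - d) ^ m = ∏ _i ∈ Finset.Icc 1 m, (1 - d) := by
          rw [Finset.prod_const, Nat.card_Icc, Nat.add_sub_cancel]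
      _ ≤ _ := Finset.prod_le_prod (fun i _ => le_of_lt hx0)
          (fun i hi => by
            have := (hp i (Finset.mem_Icc.mpr ⟨(Finset.mem_Icc.mp hi).1,
              le_trans (Finset.mem_Icc.mp hi).2 hm⟩)).2
            linarith)
  -- product upper bound via exp
  have hprodle : ∀ m, m ≤ N →
      (∏ i ∈ Finset.Icc 1 m, (1 - p i)) ≤ Real.exp (-(∑ i ∈ Finset.Icc 1 m, p i)) := by
    intro m hm
    have he : Real.exp (-(∑ i ∈ Finset.Icc 1 m, p i))
        = ∏ i ∈ Finset.Icc 1 m, Real.exp (-(p i)) := by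
      rw [← Real.exp_sum, ← Finset.sum_neg_distrib]
    rw [he]
    refine Finset.prod_le_prod (fun i hi => ?_) (fun i hi => ?_)
    · have := (hp i (Finset.mem_Icc.mpr ⟨(Finset.mem_Icc.mp hi).1,
        le_trans (Finset.mem_Icc.mp hi).2 hm⟩)).2
      linarith
    · have := Real.add_one_le_exp (-(p i))
      linarith
  have ek : k - 1 + 1 = k := by omega
  have hPk : (∏ i ∈ Finset.Icc 1 k, (1 - p i))
      = (∏ i ∈ Finset.Icc 1 (k - 1), (1 - p i)) * (1 - p k) := by
    have h := Finset.prod_Icc_succ_top (show 1 ≤ k - 1 + 1 by omega) (fun i => 1 - p i)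
    rw [ek] at h
    exact h
  -- abbreviations
  have key : q1 p t k n + q2 p t k n + q3 p t k n
      = T * (p k - p (k + n)) / (1 - p k) *
        ((∑ l ∈ Finset.Icc (k + 1) (k + n - 1),
            (l : ℝ) * (∏ i ∈ Finset.Icc 1 (l - 1), (1 - p i)) * p l)
          + ((k : ℝ) + (n : ℝ)) * (∏ i ∈ Finset.Icc 1 (k + n - 1), (1 - p i))
          - (k : ℝ) * (∏ i ∈ Finset.Icc 1 k, (1 - p i))) := by
    have hq2 : q2 p t k n = ∑ l ∈ Finset.Icc (k + 1) (k + n - 1),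
        T * (p k - p (k + n)) / (1 - p k) *
          ((l : ℝ) * (∏ i ∈ Finset.Icc 1 (l - 1), (1 - p i)) * p l) := by
      unfold q2
      refine Finset.sum_congr rfl (fun l hl => ?_)
      have hl' := Finset.mem_Icc.mp hl
      have hlN : l ≤ N := by omega
      rw [hts l hlN, ht k hkmem, ht (k + n) hknmem]
      field_simp
      ring
    unfold q1 q3
    rw [hq2, hts (k - 1) (by omega), hts (k + n) hkn, ht k hkmem, ht (k + n) hknmem,
      ← Finset.mul_sum, Nat.cast_sub hk, Nat.cast_one, Nat.cast_add, hPk]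
    field_simp
    ring
  -- lower bound for the bracket
  have hbra : c * (∑ l ∈ Finset.Icc (k + 1) (k + n - 1), (l : ℝ) * (1 - d) ^ (l - 1))
        + ((k : ℝ) + (n : ℝ)) * (1 - d) ^ (k + n - 1)
        - (k : ℝ) * ((1 - p k) * Real.exp (-(∑ i ∈ Finset.Icc 1 (k - 1), p i)))
      ≤ (∑ l ∈ Finset.Icc (k + 1) (k + n - 1),
            (l : ℝ) * (∏ i ∈ Finset.Icc 1 (l - 1), (1 - p i)) * p l)
        + ((k : ℝ) + (n : ℝ)) * (∏ i ∈ Finset.Icc 1 (k + n - 1), (1 - p i))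
        - (k : ℝ) * (∏ i ∈ Finset.Icc 1 k, (1 - p i)) := by
    have h1 : c * (∑ l ∈ Finset.Icc (k + 1) (k + n - 1), (l : ℝ) * (1 - d) ^ (l - 1))
        ≤ ∑ l ∈ Finset.Icc (k + 1) (k + n - 1),
            (l : ℝ) * (∏ i ∈ Finset.Icc 1 (l - 1), (1 - p i)) * p l := by
      rw [Finset.mul_sum]
      refine Finset.sum_le_sum (fun l hl => ?_)
      have hl' := Finset.mem_Icc.mp hl
      have hlmem : l ∈ Finset.Icc 1 N := Finset.mem_Icc.mpr ⟨by omega, by omega⟩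
      have hcl : c ≤ p l := (hp l hlmem).1
      have hpl : (1 - d) ^ (l - 1) ≤ ∏ i ∈ Finset.Icc 1 (l - 1), (1 - p i) :=
        hprodge (l - 1) (by omega)
      have hl0 : (0:ℝ) ≤ (l : ℝ) := Nat.cast_nonneg l
      have hx : (0:ℝ) ≤ (1 - d) ^ (l - 1) := le_of_lt (pow_pos hx0 _)
      calc c * ((l : ℝ) * (1 - d) ^ (l - 1)) = (l : ℝ) * (1 - d) ^ (l - 1) * c := by ring
        _ ≤ (l : ℝ) * (∏ i ∈ Finset.Icc 1 (l - 1), (1 - p i)) * p l := by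
            apply mul_le_mul (by apply mul_le_mul_of_nonneg_left hpl hl0) hcl
              (le_of_lt hc0) (mul_nonneg hl0 (le_trans hx hpl))
    have h2 : ((k : ℝ) + (n : ℝ)) * (1 - d) ^ (k + n - 1)
        ≤ ((k : ℝ) + (n : ℝ)) * ∏ i ∈ Finset.Icc 1 (k + n - 1), (1 - p i) := by
      apply mul_le_mul_of_nonneg_left (hprodge (k + n - 1) (by omega)) (by positivity)
    have h3 : (k : ℝ) * (∏ i ∈ Finset.Icc 1 k, (1 - p i))
        ≤ (k : ℝ) * ((1 - p k) * Real.exp (-(∑ i ∈ Finset.Icc 1 (k - 1), p i))) := by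
      apply mul_le_mul_of_nonneg_left _ (Nat.cast_nonneg k)
      rw [hPk, mul_comm (1 - p k) (Real.exp (-(∑ i ∈ Finset.Icc 1 (k - 1), p i)))]
      exact mul_le_mul_of_nonneg_right (hprodle (k - 1) (by omega)) (le_of_lt hu)
    linarith
  -- the RHS equals T*(pk - pkn)/(1-p k) times the lower-bound bracket
  have hrhs : T * c * ((p k - p (k + n)) / (1 - p k)) * ((1 - d) ^ k / d ^ 2) *
        ((1 + (k : ℝ) * d *
            (1 - ((1 - p k) / (1 - d)) * (d / c) *
              (Real.exp (-(∑ i ∈ Finset.Icc 1 (k - 1), p i)) / (1 - d) ^ (k - 1)))) -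
          (1 - d + d * ((n : ℝ) + (k : ℝ)) * (1 - d / c)) * (1 - d) ^ (n - 1))
      = T * (p k - p (k + n)) / (1 - p k) *
        (c * (∑ l ∈ Finset.Icc (k + 1) (k + n - 1), (l : ℝ) * (1 - d) ^ (l - 1))
          + ((k : ℝ) + (n : ℝ)) * (1 - d) ^ (k + n - 1)
          - (k : ℝ) * ((1 - p k) * Real.exp (-(∑ i ∈ Finset.Icc 1 (k - 1), p i)))) := by
    have hgeo := geo_sum (1 - d) k n hn
    rw [show (1 - (1 - d)) = d from by ring] at hgeo
    have hsum : (∑ l ∈ Finset.Icc (k + 1) (k + n - 1), (l : ℝ) * (1 - d) ^ (l - 1))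
        = ((1 - d) ^ k * (1 + (k : ℝ) * d) -
            (1 - d) ^ (k + n - 1) * (((k : ℝ) + (n : ℝ)) - ((k : ℝ) + (n : ℝ) - 1) * (1 - d)))
          / d ^ 2 := by
      field_simp
      linarith [hgeo]
    rw [hsum]
    have e1 : (1 - d) ^ k = (1 - d) ^ (k - 1) * (1 - d) := by
      rw [← pow_succ, ek]
    have e2 : (1 - d) ^ (k + n - 1) = (1 - d) ^ (k - 1) * ((1 - d) ^ (n - 1) * (1 - d)) := by
      rw [← pow_succ, ← pow_add]
      congr 1
      omega
    rw [e1, e2]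
    field_simp
    ring
  rw [ge_iff_le, key, hrhs]
  apply mul_le_mul_of_nonneg_left hbra
  exact div_nonneg (mul_nonneg hT.le hΔ) hu.le
end

section
/- Let p_i = p for each i = 1,…,N and some p ∈ (0,1). Let 1 ≤ k, 1 ≤ n with k+n ≤ N. Then EXC = q_1 + q_2 + q_3 equals exactly EXC = (t_{k+n} − t_k) · (1−p)^{k−1} · (1 − (1−p)^n). -/
open Finset

/-! When `p_k = p_{k+n}`, `q_3` vanishes and the factor `(1 - p_{k+n}) / (1 - p_k)` in `q_2`
cancels, so with all probabilities equal to `p` the sum `q_1 + q_2` is `t_{k+n} - t_k` times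
`∑_{l=k}^{k+n-1} (1-p)^{l-1} p`, a telescoping geometric sum equal to `(1-p)^{k-1} (1 - (1-p)^n)`. -/

theorem sum_Icc_pow_sub_one_mul_one_sub {R : Type*} [CommRing R] (x : R) {k : ℕ} (hk : 1 ≤ k)
    (n : ℕ) : ∑ l ∈ Icc k (k + n - 1), x ^ (l - 1) * (1 - x) = x ^ (k - 1) * (1 - x ^ n) := by
  obtain ⟨m, rfl⟩ := Nat.exists_eq_add_of_le' hk
  have hIcc : Icc (m + 1) (m + 1 + n - 1) = Ico (m + 1) (m + n + 1) := by
    rw [Ico_add_one_right_eq_Icc]; congr 1; omega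
  rw [hIcc, ← sum_Ico_add', ← sum_mul]
  simp only [Nat.add_sub_cancel]
  rw [geom_sum_Ico_mul_neg x (Nat.le_add_right m n), pow_add]
  ring

theorem prod_Icc_one_sub_eq_pow {R : Type*} [CommRing R] {ps : ℕ → R} {p : R} {m : ℕ}
    (h : ∀ i ∈ Icc 1 m, ps i = p) :
    ∏ i ∈ Icc 1 m, (1 - ps i) = (1 - p) ^ m := by
  rw [prod_eq_pow_card fun i hi => by rw [h i hi], Nat.card_Icc, Nat.add_sub_cancel]

section ConstantProbability

variable {ps : ℕ → ℝ} {p : ℝ} {k n : ℕ} (t : ℕ → ℝ)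

theorem q1_of_forall_eq (hk : 1 ≤ k) (h : ∀ i ∈ Icc 1 (k + n), ps i = p) :
    q1 ps t k n = (t (k + n) - t k) * (1 - p) ^ (k - 1) * p := by
  rw [q1, h k (by simp; omega), h (k + n) (by simp; omega),
    prod_Icc_one_sub_eq_pow fun i hi => h i (Icc_subset_Icc_right (by omega) hi)]
  ring

theorem q2_of_forall_eq (hk : 1 ≤ k) (h : ∀ i ∈ Icc 1 (k + n), ps i = p) (hp : p ≠ 1) :
    q2 ps t k n = (t (k + n) - t k) * ∑ l ∈ Icc (k + 1) (k + n - 1), (1 - p) ^ (l - 1) * p := by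
  have hp' : 1 - p ≠ 0 := sub_ne_zero.mpr hp.symm
  rw [q2, mul_sum]
  refine sum_congr rfl fun l hl => ?_
  obtain ⟨hkl, hln⟩ := mem_Icc.mp hl
  rw [h k (by simp; omega), h (k + n) (by simp; omega), h l (by simp; omega),
    prod_Icc_one_sub_eq_pow fun i hi => h i (Icc_subset_Icc_right (by omega) hi)]
  field_simp
  ring

theorem q3_eq_zero_of_eq (h : ps k = ps (k + n)) : q3 ps t k n = 0 := by
  rw [q3, h, sub_self, mul_zero, zero_div]

end ConstantProbability

theorem excess_equal_probabilities_general
    (N : ℕ) (ps t : ℕ → ℝ) (p : ℝ)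
    (hp : p ∈ Set.Ioo (0 : ℝ) 1)
    (hps : ∀ i ∈ Finset.Icc 1 N, ps i = p)
    (k n : ℕ) (hk : 1 ≤ k) (hn : 1 ≤ n) (hkn : k + n ≤ N) :
    q1 ps t k n + q2 ps t k n + q3 ps t k n =
      (t (k + n) - t k) * (1 - p) ^ (k - 1) * (1 - (1 - p) ^ n) := by
  have h : ∀ i ∈ Icc 1 (k + n), ps i = p := fun i hi => hps i (Icc_subset_Icc_right hkn hi)
  have hgeom := sum_Icc_pow_sub_one_mul_one_sub (1 - p) hk n
  rw [← add_sum_Ioc_eq_sum_Icc (by omega), ← Icc_add_one_left_eq_Ioc, sub_sub_cancel] at hgeom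
  have hqk : ps k = ps (k + n) := by rw [h k (by simp; omega), h (k + n) (by simp; omega)]
  rw [q1_of_forall_eq t hk h, q2_of_forall_eq t hk h hp.2.ne, q3_eq_zero_of_eq t hqk]
  linear_combination (t (k + n) - t k) * hgeom

/-- If all success probabilities are equal to some `p ∈ (0,1)`, then the excess expected
solving time `EXC = q_1 + q_2 + q_3` caused by interchanging the `k`-th and `(k+n)`-th
candidates equals exactly `EXC = (t_{k+n} − t_k)·(1−p)^{k−1}·(1 − (1−p)^n)`. -/
theorem excess_equal_probabilities
    (N : ℕ) (hN : 1 ≤ N) (ps t : ℕ → ℝ) (p : ℝ)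
    (hp : p ∈ Set.Ioo (0 : ℝ) 1)
    (hps : ∀ i ∈ Finset.Icc 1 N, ps i = p)
    (ht : ∀ i ∈ Finset.Icc 1 N, 0 < t i)
    (k n : ℕ) (hk : 1 ≤ k) (hn : 1 ≤ n) (hkn : k + n ≤ N) :
    q1 ps t k n + q2 ps t k n + q3 ps t k n =
      (t (k + n) - t k) * (1 - p) ^ (k - 1) * (1 - (1 - p) ^ n) :=
  excess_equal_probabilities_general N ps t p hp hps k n hk hn hkn
end

section
/- For each candidate k = 1,…,N, let n_k ≥ 1 past execution times t_{k,1}, …, t_{k,n_k} > 0 be given and let Et_k = (t_{k,1} + … + t_{k,n_k})/n_k be their mean. Suppose the candidates are ordered so that p_1/Et_1 ≥ p_2/Et_2 ≥ … ≥ p_N/Et_N. Then for every permutation σ of {1,…,N}, the expected solving time computed with the mean execution times satisfies E_{Et}(id) ≤ E_{Et}(σ). -/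
open Finset

/-- Mean of the `n_k` past execution times `t_{k,1}, …, t_{k,n_k}` of candidate `k`:
`Et_k = (t_{k,1} + … + t_{k,n_k})/n_k`. -/
noncomputable def meanTime (nk : ℕ → ℕ) (t : ℕ → ℕ → ℝ) (k : ℕ) : ℝ :=
  (∑ j ∈ Finset.Icc 1 (nk k), t k j) / (nk k : ℝ)

/-!
With `Q_k = ∏_{j ≤ k} (1 - p_{σ j})`, the expected time is `Σ_l Et_{σ l} Q_{l-1} - Q_N Σ_l Et_l`,
and the subtracted term does not depend on `σ`. The weighted time `W = Σ_l Et_{σ l} Q_{l-1}` of a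
schedule satisfies `W(a :: l) = Et_a + (1 - p_a) W(l)`, so exchanging two adjacent candidates `a, b`
changes it by `p_a Et_b - p_b Et_a`. Hence moving a candidate of maximal ratio `p/Et` to the front
never increases `W`, and induction on the schedule shows that the schedule sorted by decreasing
ratio is optimal.
-/

namespace List

variable {α : Type*}

lemma map_perm_self {σ : Equiv.Perm α} {l : List α} (hl : l.Nodup)
    (hσ : ∀ a ∉ l, σ a = a) : (l.map σ).Perm l := by
  refine (perm_ext_iff_of_nodup (hl.map σ.injective) hl).mpr fun a => ⟨?_, fun ha => ?_⟩
  · rw [mem_map]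
    rintro ⟨b, hb, rfl⟩
    by_contra hσb
    exact hσb (by rwa [σ.injective (hσ _ hσb)])
  · refine List.mem_map.mpr ⟨σ.symm a, ?_, σ.apply_symm_apply a⟩
    by_contra h
    have hfix : a = σ.symm a := by simpa using hσ _ h
    exact h (hfix ▸ ha)

lemma pairwise_range'_of_succ_le {β : Type*} [Preorder β] {f : ℕ → β} {N : ℕ}
    (hf : ∀ i ∈ Icc 1 (N - 1), f (i + 1) ≤ f i) :
    (range' 1 N).Pairwise fun a b => f b ≤ f a := by
  have hanti : AntitoneOn f (Set.Icc 1 N) :=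
    antitoneOn_of_add_one_le Set.ordConnected_Icc fun a _ ha ha' => by
      simp only [Set.mem_Icc] at ha ha'
      exact hf a (Finset.mem_Icc.mpr ⟨ha.1, by omega⟩)
  refine (pairwise_lt_range' (s := 1) (n := N)).imp_of_mem fun ha hb hab => ?_
  rw [mem_range'_1] at ha hb
  exact hanti ⟨ha.1, by omega⟩ ⟨hb.1, by omega⟩ hab.le

section WeightedTime

variable (p t : α → ℝ)

noncomputable def weightedTime : List α → ℝ
  | [] => 0
  | a :: l => t a + (1 - p a) * weightedTime l

@[simp]
lemma weightedTime_nil : weightedTime p t [] = 0 := rfl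

@[simp]
lemma weightedTime_cons (a : α) (l : List α) :
    weightedTime p t (a :: l) = t a + (1 - p a) * weightedTime p t l := rfl

lemma weightedTime_append_singleton (l : List α) (x : α) :
    weightedTime p t (l ++ [x]) = weightedTime p t l + (l.map (1 - p ·)).prod * t x := by
  induction l with
  | nil => simp
  | cons a l ih => simp only [cons_append, weightedTime_cons, ih, List.map_cons, prod_cons]; ring

variable {p t}

lemma weightedTime_swap_le {a b : α} (l : List α) (hab : p b * t a ≤ p a * t b) :
    weightedTime p t (a :: b :: l) ≤ weightedTime p t (b :: a :: l) := by
  simp only [weightedTime_cons]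
  linear_combination hab

lemma weightedTime_cons_le_cons (a : α) {l l' : List α} (ha : p a ≤ 1)
    (h : weightedTime p t l ≤ weightedTime p t l') :
    weightedTime p t (a :: l) ≤ weightedTime p t (a :: l') := by
  simp only [weightedTime_cons]
  gcongr

lemma weightedTime_cons_append_le {a : α} {u : List α} (v : List α)
    (hu : ∀ b ∈ u, p b ≤ 1 ∧ p b * t a ≤ p a * t b) :
    weightedTime p t (a :: (u ++ v)) ≤ weightedTime p t (u ++ a :: v) := by
  induction u with
  | nil => rfl
  | cons b u ih =>
    obtain ⟨hb, hab⟩ := hu b List.mem_cons_self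
    calc weightedTime p t (a :: b :: (u ++ v))
        ≤ weightedTime p t (b :: a :: (u ++ v)) := weightedTime_swap_le _ hab
      _ ≤ weightedTime p t (b :: (u ++ a :: v)) :=
          weightedTime_cons_le_cons b hb (ih fun c hc => hu c (mem_cons_of_mem b hc))

theorem weightedTime_le_of_perm {l l' : List α}
    (hl : l.Pairwise fun a b => p b * t a ≤ p a * t b) (hp : ∀ a ∈ l, p a ≤ 1) (h : l.Perm l') :
    weightedTime p t l ≤ weightedTime p t l' := by
  induction l generalizing l' with
  | nil => rw [nil_perm.mp h]
  | cons a s ih =>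
    obtain ⟨u, v, rfl⟩ := append_of_mem (h.subset List.mem_cons_self)
    have hs : s.Perm (u ++ v) := (h.trans perm_middle).cons_inv
    obtain ⟨has, hs_sorted⟩ := pairwise_cons.mp hl
    calc weightedTime p t (a :: s)
        ≤ weightedTime p t (a :: (u ++ v)) :=
          weightedTime_cons_le_cons a (hp a List.mem_cons_self)
            (ih hs_sorted (fun b hb => hp b (mem_cons_of_mem a hb)) hs)
      _ ≤ weightedTime p t (u ++ a :: v) := by
          refine weightedTime_cons_append_le v fun b hb => ?_
          have hb : b ∈ s := hs.symm.subset (mem_append_left v hb)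
          exact ⟨hp b (mem_cons_of_mem a hb), has b hb⟩

end WeightedTime

end List

open List in
lemma solveTime_eq_weightedTime (N : ℕ) (p t : ℕ → ℝ) (σ : Equiv.Perm ℕ) :
    solveTime N p t σ = ((range' 1 N).map σ).weightedTime p t
      - (((range' 1 N).map σ).map (1 - p ·)).prod * (((range' 1 N).map σ).map t).sum := by
  induction N with
  | zero => simp [solveTime]
  | succ N ih =>
    have hsum : ∀ k, ∑ l ∈ Icc 1 k, t (σ l) = (((range' 1 k).map σ).map t).sum := by
      intro k; rw [List.map_map, ← List.sum_toFinset _ nodup_range', List.toFinset_range'_1_1]; rfl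
    have hprod : ∏ j ∈ Icc 1 N, (1 - p (σ j)) = (((range' 1 N).map σ).map (1 - p ·)).prod := by
      rw [List.map_map, ← List.prod_toFinset _ nodup_range', List.toFinset_range'_1_1]; rfl
    rw [solveTime, Finset.sum_Icc_succ_top (by omega), ← solveTime, ih, hsum, Nat.add_sub_cancel,
      hprod, range'_concat]
    simp only [List.map_append, weightedTime_append_singleton, prod_append, sum_append,
      List.map_cons, List.map_nil, List.prod_singleton, List.sum_singleton, one_mul, Nat.add_comm 1 N]
    ring

lemma meanTime_pos {nk : ℕ → ℕ} {t : ℕ → ℕ → ℝ} {k : ℕ} (hk : 1 ≤ nk k)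
    (ht : ∀ j ∈ Icc 1 (nk k), 0 < t k j) : 0 < meanTime nk t k :=
  div_pos (sum_pos ht (nonempty_Icc.mpr hk)) (by exact_mod_cast hk)

theorem solomonoff_strategy_optimal_mean_times_general
    (N : ℕ) (p : ℕ → ℝ) (nk : ℕ → ℕ) (t : ℕ → ℕ → ℝ)
    (hp : ∀ i ∈ Finset.Icc 1 N, p i ∈ Set.Icc (0 : ℝ) 1)
    (hnk : ∀ k ∈ Finset.Icc 1 N, 1 ≤ nk k)
    (ht : ∀ k ∈ Finset.Icc 1 N, ∀ j ∈ Finset.Icc 1 (nk k), 0 < t k j)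
    (hord : ∀ i ∈ Finset.Icc 1 (N - 1),
      p (i + 1) / meanTime nk t (i + 1) ≤ p i / meanTime nk t i)
    (σ : Equiv.Perm ℕ) (hσ : ∀ i, i ∉ Finset.Icc 1 N → σ i = i) :
    solveTime N p (meanTime nk t) (Equiv.refl ℕ) ≤ solveTime N p (meanTime nk t) σ := by
  set Et := meanTime nk t
  have hIcc : ∀ a, a ∈ List.range' 1 N ↔ a ∈ Icc 1 N := fun a => by
    rw [← List.toFinset_range'_1_1, List.mem_toFinset]
  have hsorted : (List.range' 1 N).Pairwise fun a b => p b * Et a ≤ p a * Et b :=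
    (List.pairwise_range'_of_succ_le hord).imp_of_mem fun ha hb hab =>
      (div_le_div_iff₀ (meanTime_pos (hnk _ ((hIcc _).1 hb)) (ht _ ((hIcc _).1 hb)))
        (meanTime_pos (hnk _ ((hIcc _).1 ha)) (ht _ ((hIcc _).1 ha)))).mp hab
  have hperm : (List.range' 1 N).Perm ((List.range' 1 N).map σ) :=
    (List.map_perm_self List.nodup_range' fun a ha => hσ a (mt (hIcc a).2 ha)).symm
  rw [solveTime_eq_weightedTime, solveTime_eq_weightedTime, Equiv.coe_refl, List.map_id,
    (hperm.map _).prod_eq, (hperm.map _).sum_eq]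
  gcongr
  exact List.weightedTime_le_of_perm hsorted (fun a ha => (hp a ((hIcc a).1 ha)).2) hperm

/-- If the candidates are ordered so that `p_1/Et_1 ≥ p_2/Et_2 ≥ … ≥ p_N/Et_N`, where `Et_k`
is the mean of the past execution times of candidate `k`, then for every permutation `σ` of
`{1,…,N}` the expected solving time computed with the mean execution times satisfies
`E_{Et}(id) ≤ E_{Et}(σ)`. -/
theorem solomonoff_strategy_optimal_mean_times
    (N : ℕ) (hN : 1 ≤ N) (p : ℕ → ℝ) (nk : ℕ → ℕ) (t : ℕ → ℕ → ℝ)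
    (hp : ∀ i ∈ Finset.Icc 1 N, p i ∈ Set.Icc (0 : ℝ) 1)
    (hnk : ∀ k ∈ Finset.Icc 1 N, 1 ≤ nk k)
    (ht : ∀ k ∈ Finset.Icc 1 N, ∀ j ∈ Finset.Icc 1 (nk k), 0 < t k j)
    (hord : ∀ i ∈ Finset.Icc 1 (N - 1),
      p (i + 1) / meanTime nk t (i + 1) ≤ p i / meanTime nk t i)
    (σ : Equiv.Perm ℕ) (hσ : ∀ i, i ∉ Finset.Icc 1 N → σ i = i) :
    solveTime N p (meanTime nk t) (Equiv.refl ℕ) ≤ solveTime N p (meanTime nk t) σ :=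
  solomonoff_strategy_optimal_mean_times_general N p nk t hp hnk ht hord σ hσ
end
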